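/- arXiv:2307.15380 — 6 statements merged into one kernel-verified Lean document; each statement's English description precedes it below -/
import Mathlib

section
/- Let f ∈ F[x₁,…,x_d] be a polynomial and ℓ a line in F^d. If the sum over points p on ℓ of the multiplicity mult(f,p) exceeds deg f, then f vanishes identically on ℓ (i.e., its restriction to ℓ is the zero polynomial). -/
open MvPolynomial

/-- Hasse derivative of a multivariate polynomial with respect to multi-index `α`. -/
noncomputable def hasseDeriv {d : ℕ} {F : Type*} [CommRing F] (α : Fin d →₀ ℕ)
    (f : MvPolynomial (Fin d) F) : MvPolynomial (Fin d) F :=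
  (AddMonoidAlgebra.coeff f).sum fun β c => monomial (β - α) (c * ((∏ i, (β i).choose (α i) : ℕ) : F))

/-- `f` has multiplicity at least `v` at `p`: all Hasse derivatives of order `< v` vanish at `p`. -/
def multAtLeast {d : ℕ} {F : Type*} [CommRing F] (f : MvPolynomial (Fin d) F)
    (p : Fin d → F) (v : ℕ) : Prop :=
  ∀ α : Fin d →₀ ℕ, (α.sum fun _ n => n) < v → eval p (hasseDeriv α f) = 0

section Helpers
variable {d : ℕ} {F : Type*} [CommRing F]

lemma hasseDeriv_monomial (α γ : Fin d →₀ ℕ) (c : F) :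
    hasseDeriv α (monomial γ c)
      = monomial (γ - α) (c * ((∏ i, (γ i).choose (α i) : ℕ) : F)) := by
  unfold hasseDeriv
  rw [sum_monomial_eq]
  simp

lemma hasseDeriv_add (α : Fin d →₀ ℕ) (f g : MvPolynomial (Fin d) F) :
    hasseDeriv α (f + g) = hasseDeriv α f + hasseDeriv α g := by
  unfold hasseDeriv
  exact Finsupp.sum_add_index' (by simp) (by intros; simp [add_mul])

lemma taylor_coeff_monomial (p : Fin d → F) (γ β : Fin d →₀ ℕ) (c : F) :
    coeff β (aeval (fun i => X i + C (p i)) (monomial γ c))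
      = eval p (hasseDeriv β (monomial γ c)) := by
  rw [hasseDeriv_monomial, eval_monomial, aeval_monomial, MvPolynomial.algebraMap_eq]
  rw [Finsupp.prod_fintype _ _ (fun i => pow_zero _),
      Finsupp.prod_fintype _ _ (fun i => pow_zero _)]
  simp only [Finsupp.tsub_apply]
  have expand : ∀ i : Fin d, (X i + C (p i) : MvPolynomial (Fin d) F) ^ (γ i)
      = ∑ k ∈ Finset.range (γ i + 1),
          X i ^ k * C (p i) ^ (γ i - k) * ((γ i).choose k : MvPolynomial (Fin d) F) :=
    fun i => add_pow _ _ _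
  simp only [expand]
  rw [Finset.prod_univ_sum]
  have hterm : ∀ x : Fin d → ℕ,
      (∏ i, (X i ^ x i * C (p i) ^ (γ i - x i) * ((γ i).choose (x i) : MvPolynomial (Fin d) F)))
        = monomial (Finsupp.equivFunOnFinite.symm x)
            ((∏ i, p i ^ (γ i - x i)) * ((∏ i, (γ i).choose (x i) : ℕ) : F)) := by
    intro x
    have hc : ∀ i : Fin d, ((γ i).choose (x i) : MvPolynomial (Fin d) F)
        = C (((γ i).choose (x i) : ℕ) : F) := fun i => (map_natCast C _).symm
    simp only [hc, ← C_pow]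
    rw [monomial_eq, Finsupp.prod_fintype _ _ (fun i => pow_zero _)]
    simp only [Finsupp.coe_equivFunOnFinite_symm, Finsupp.coe_mk]
    try simp only [Finsupp.equivFunOnFinite]
    rw [Finset.prod_mul_distrib, Finset.prod_mul_distrib, ← map_prod, ← map_prod,
        ← Nat.cast_prod, C_mul]
    ring
  simp only [hterm]
  rw [Finset.mul_sum, MvPolynomial.coeff_sum]
  simp only [coeff_C_mul, coeff_monomial]
  rw [Finset.sum_eq_single (⇑β : Fin d → ℕ)]
  · simp [mul_assoc]
    ring
  · intro x hx hne
    have hno : ¬ (Finsupp.equivFunOnFinite.symm x = β) := by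
      intro h
      apply hne
      rw [← h]
      rfl
    simp [hno]
  · intro hmem
    have : ∃ i, ¬ β i < γ i + 1 := by
      by_contra h
      push_neg at h
      exact hmem (by simpa [Fintype.mem_piFinset, Nat.lt_succ_iff] using fun i => h i)
    obtain ⟨i, hi⟩ := this
    have hch : (∏ i, (γ i).choose (β i)) = 0 :=
      Finset.prod_eq_zero (Finset.mem_univ i) (Nat.choose_eq_zero_of_lt (by omega))
    simp [hch]

lemma taylor_coeff (p : Fin d → F) (f : MvPolynomial (Fin d) F) (β : Fin d →₀ ℕ) :
    coeff β (aeval (fun i => X i + C (p i)) f) = eval p (hasseDeriv β f) := by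
  induction f using MvPolynomial.induction_on' with
  | monomial γ c => exact taylor_coeff_monomial p γ β c
  | add f g hf hg => rw [map_add, coeff_add, hf, hg, hasseDeriv_add, map_add]

lemma X_pow_dvd_line (p dir : Fin d → F) (f : MvPolynomial (Fin d) F) (v : ℕ)
    (h : multAtLeast f p v) :
    (Polynomial.X : Polynomial F) ^ v ∣
      aeval (fun i => Polynomial.C (p i) + Polynomial.C (dir i) * Polynomial.X) f := by
  have key : aeval (fun i => Polynomial.C (p i) + Polynomial.C (dir i) * Polynomial.X) f
      = aeval (fun i => Polynomial.C (dir i) * Polynomial.X)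
          (aeval (fun i => X i + C (p i)) f) := by
    rw [← AlgHom.comp_apply, MvPolynomial.comp_aeval]
    have harg : (fun i => (aeval (fun i => Polynomial.C (dir i) * Polynomial.X)
          : MvPolynomial (Fin d) F →ₐ[F] Polynomial F) (X i + C (p i)))
        = fun i => Polynomial.C (p i) + Polynomial.C (dir i) * Polynomial.X := by
      funext i
      simp only [map_add, aeval_X, aeval_C, Polynomial.algebraMap_eq]
      ring
    rw [harg]
  rw [key]
  conv_rhs => rw [← support_sum_monomial_coeff (aeval (fun i => X i + C (p i)) f)]
  rw [map_sum]
  apply Finset.dvd_sum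
  intro β hβ
  have hv : v ≤ β.sum fun _ n => n := by
    by_contra hlt
    push_neg at hlt
    exact (mem_support_iff.mp hβ) ((taylor_coeff p f β).symm ▸ h β hlt)
  rw [aeval_monomial]
  apply Dvd.dvd.mul_left
  refine dvd_trans (pow_dvd_pow _ hv) ?_
  rw [Finsupp.prod, Finsupp.sum]
  simp only [mul_pow]
  rw [Finset.prod_mul_distrib, Finset.prod_pow_eq_pow_sum]
  exact Dvd.dvd.mul_left dvd_rfl _

lemma natDegree_line_le {u : Fin d → Polynomial F} (hu : ∀ i, (u i).natDegree ≤ 1)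
    (f : MvPolynomial (Fin d) F) : (aeval u f).natDegree ≤ f.totalDegree := by
  conv_lhs => rw [← support_sum_monomial_coeff f]
  rw [map_sum]
  apply Polynomial.natDegree_sum_le_of_forall_le
  intro β hβ
  rw [aeval_monomial]
  refine le_trans (Polynomial.natDegree_mul_le) ?_
  have h1 : (algebraMap F (Polynomial F) (coeff β f)).natDegree = 0 :=
    Polynomial.natDegree_C _
  rw [h1, zero_add]
  refine le_trans ?_ (le_totalDegree hβ)
  rw [Finsupp.prod, Finsupp.sum]
  refine le_trans (Polynomial.natDegree_prod_le β.support fun a => u a ^ β a) ?_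
  apply Finset.sum_le_sum
  intro i _
  calc (u i ^ β i).natDegree ≤ β i * (u i).natDegree := Polynomial.natDegree_pow_le
    _ ≤ β i * 1 := Nat.mul_le_mul_left _ (hu i)
    _ = β i := Nat.mul_one _


end Helpers

/-- If the total multiplicity of `f` at points of a line exceeds `deg f`, then `f`
vanishes identically on the line. -/
theorem stmt0 {d : ℕ} {F : Type*} [Field F] (f : MvPolynomial (Fin d) F)
    (p₀ dir : Fin d → F) (hdir : dir ≠ 0)
    (P : Finset (Fin d → F)) (hP : ∀ p ∈ P, ∃ t : F, p = p₀ + t • dir)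
    (m : (Fin d → F) → ℕ) (hm : ∀ p ∈ P, multAtLeast f p (m p))
    (hsum : f.totalDegree < ∑ p ∈ P, m p) :
    aeval (fun i => Polynomial.C (p₀ i) + Polynomial.C (dir i) * Polynomial.X) f
      = (0 : Polynomial F) := by
  classical
  by_contra hg0
  choose! t htspec using hP
  have hdvd : ∀ p ∈ P, (Polynomial.X - Polynomial.C (t p)) ^ (m p) ∣
      aeval (fun i => Polynomial.C (p₀ i) + Polynomial.C (dir i) * Polynomial.X) f := by
    intro p hp
    have hXv : (Polynomial.X : Polynomial F) ^ (m p) ∣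
        aeval (fun i => Polynomial.C (p i) + Polynomial.C (dir i) * Polynomial.X) f :=
      X_pow_dvd_line p dir f (m p) (hm p hp)
    have hmap := map_dvd
      (Polynomial.aeval (Polynomial.X - Polynomial.C (t p)) : Polynomial F →ₐ[F] Polynomial F)
      hXv
    rw [map_pow, Polynomial.aeval_X, ← AlgHom.comp_apply, MvPolynomial.comp_aeval] at hmap
    have harg : (fun i => (Polynomial.aeval (Polynomial.X - Polynomial.C (t p))
          : Polynomial F →ₐ[F] Polynomial F)
            (Polynomial.C (p i) + Polynomial.C (dir i) * Polynomial.X))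
        = fun i => Polynomial.C (p₀ i) + Polynomial.C (dir i) * Polynomial.X := by
      funext i
      have hpi : p i = p₀ i + t p * dir i := by
        conv_lhs => rw [htspec p hp]
        simp
      simp only [map_add, map_mul, Polynomial.aeval_X, Polynomial.aeval_C,
        Polynomial.algebraMap_eq, hpi]
      ring
    rwa [harg] at hmap
  have hprod : (∏ p ∈ P, (Polynomial.X - Polynomial.C (t p)) ^ (m p)) ∣
      aeval (fun i => Polynomial.C (p₀ i) + Polynomial.C (dir i) * Polynomial.X) f := by
    apply Finset.prod_dvd_of_coprime
    · intro p hp q hq hne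
      have htne : t p ≠ t q := by
        intro he
        apply hne
        rw [htspec p hp, htspec q hq, he]
      exact (Polynomial.pairwise_coprime_X_sub_C (Function.injective_id (α := F)) htne).pow
    · exact fun p hp => hdvd p hp
  have hdeg1 : (∏ p ∈ P, (Polynomial.X - Polynomial.C (t p)) ^ (m p)).natDegree
      = ∑ p ∈ P, m p := by
    rw [Polynomial.natDegree_prod _ _
      (fun p _ => pow_ne_zero _ (Polynomial.X_sub_C_ne_zero _))]
    simp [Polynomial.natDegree_pow]
  have hled : (∑ p ∈ P, m p)
      ≤ (aeval (fun i => Polynomial.C (p₀ i) + Polynomial.C (dir i) * Polynomial.X) f).natDegree := by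
    rw [← hdeg1]
    exact Polynomial.natDegree_le_of_dvd hprod hg0
  have hle : (aeval (fun i => Polynomial.C (p₀ i) + Polynomial.C (dir i) * Polynomial.X) f).natDegree
      ≤ f.totalDegree := by
    apply natDegree_line_le
    intro i
    compute_degree
  omega
end

section
/- For any polynomial f ∈ F[x₁,…,x_d], any point p ∈ F^d, and any multi-index α ∈ Z_{≥0}^d, the multiplicity of the Hasse derivative H^α f at p is at least mult(f,p) − |α|. -/
open MvPolynomial

/-!
Hasse derivatives compose up to a binomial factor: `H^β (H^α f) = C(α + β, α) • H^(α + β) f`,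
where `C(α + β, α) = ∏ i, C(αᵢ + βᵢ, αᵢ)`. Hence every Hasse derivative of `H^α f` of order
`|β| < v - |α|` is a multiple of one of `f` of order `|α| + |β| < v`, which vanishes at `p`.
-/

section HasseDeriv

variable {d : ℕ} {F : Type*} [CommRing F]

lemma hasseDeriv_hasseDeriv (α β : Fin d →₀ ℕ) (f : MvPolynomial (Fin d) F) :
    hasseDeriv β (hasseDeriv α f) =
      (∏ i, ((α + β) i).choose (α i)) • hasseDeriv (α + β) f := by
  induction f using MvPolynomial.induction_on' with
  | monomial γ c =>
    have hcoeff : (∏ i, (γ i).choose (α i)) * ∏ i, ((γ - α) i).choose (β i) =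
        (∏ i, ((α + β) i).choose (α i)) * ∏ i, (γ i).choose ((α + β) i) := by
      rw [← Finset.prod_mul_distrib, ← Finset.prod_mul_distrib]
      refine Finset.prod_congr rfl fun i _ => ?_
      simp only [Finsupp.coe_tsub, Pi.sub_apply, Finsupp.add_apply]
      rw [mul_comm ((α i + β i).choose _), Nat.choose_mul (Nat.le_add_right _ _),
        Nat.add_sub_cancel_left, mul_comm]
    rw [hasseDeriv_monomial, hasseDeriv_monomial, hasseDeriv_monomial, smul_monomial,
      tsub_tsub, nsmul_eq_mul, mul_assoc, ← Nat.cast_mul, hcoeff, Nat.cast_mul]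
    congr 1; ring
  | add f g hf hg =>
    rw [hasseDeriv_add, hasseDeriv_add, hasseDeriv_add, hf, hg, smul_add]

theorem multAtLeast_hasseDeriv {f : MvPolynomial (Fin d) F} {p : Fin d → F} {v : ℕ}
    (h : multAtLeast f p v) (α : Fin d →₀ ℕ) :
    multAtLeast (hasseDeriv α f) p (v - α.sum fun _ n => n) := by
  intro β hβ
  have hdeg : ((α + β).sum fun _ n => n) = (α.sum fun _ n => n) + β.sum fun _ n => n :=
    map_add Finsupp.degree α β
  rw [hasseDeriv_hasseDeriv, map_nsmul, h (α + β) (by omega), smul_zero]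

end HasseDeriv

/-- The multiplicity of `H^α f` at `p` is at least `mult(f,p) - |α|`. -/
theorem stmt1 {d : ℕ} {F : Type*} [Field F] (f : MvPolynomial (Fin d) F)
    (p : Fin d → F) (α : Fin d →₀ ℕ) (v : ℕ) (h : multAtLeast f p v) :
    multAtLeast (hasseDeriv α f) p (v - α.sum fun _ n => n) :=
  multAtLeast_hasseDeriv h α
end

section
/- Let β₁,…,β_d ∈ (0,1] be all equal to β > 0 and let S(β,…,β) = {a ∈ R_{≥0}^d : |a| ≤ 1 and a_i + β(|a| − a_i) ≤ β for all i}, where |a| = a₁+…+a_d. Then the Lebesgue volume of S(β,…,β) equals ∏_{i=1}^d 1/(β⁻¹ + i − 1) = 1/(d! · binom(β⁻¹+d−1, d)). -/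
open MeasureTheory

namespace Stmt7Aux

open Finset

variable {d : ℕ}


noncomputable def pad (a : Fin d → ℝ) (n : ℕ) : ℝ := if h : n < d then a ⟨n, h⟩ else 0

lemma pad_lt (a : Fin d → ℝ) {n : ℕ} (h : n < d) : pad a n = a ⟨n, h⟩ := dif_pos h
lemma pad_ge (a : Fin d → ℝ) {n : ℕ} (h : d ≤ n) : pad a n = 0 := dif_neg (not_lt.mpr h)

lemma pad_nonneg {a : Fin d → ℝ} (ha : ∀ i, 0 ≤ a i) (n : ℕ) : 0 ≤ pad a n := by
  unfold pad; split <;> simp [ha]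

noncomputable def Smat (c : Fin d → ℝ) : Matrix (Fin d) (Fin d) ℝ :=
  Matrix.of fun i j => if i ≤ j then c j else 0

lemma mulVec_eq_sum (c x : Fin d → ℝ) (i : Fin d) :
    (Smat c).mulVec x i = ∑ n ∈ Finset.Ico i.1 d, pad (fun j => c j * x j) n := by
  have h1 : (Smat c).mulVec x i
      = ∑ j : Fin d, (fun n => if i.1 ≤ n then pad (fun j => c j * x j) n else 0) (j : ℕ) := by
    simp only [Matrix.mulVec, dotProduct, Smat, Matrix.of_apply]
    apply Finset.sum_congr rfl
    intro j _
    have hj : (j : ℕ) < d := j.isLt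
    simp only [pad_lt _ hj, Fin.eta, Fin.le_def, ite_mul, zero_mul]
  rw [h1, Fin.sum_univ_eq_sum_range (fun n => if i.1 ≤ n then pad (fun j => c j * x j) n else 0) d,
    ← Finset.sum_filter]
  congr 1
  ext n
  simp only [Finset.mem_filter, Finset.mem_range, Finset.mem_Ico]
  tauto

lemma pad_mulVec (c x : Fin d → ℝ) (n : ℕ) :
    pad ((Smat c).mulVec x) n = ∑ k ∈ Finset.Ico n d, pad (fun j => c j * x j) k := by
  rcases lt_or_ge n d with h | h
  · rw [pad_lt _ h, mulVec_eq_sum]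
  · rw [pad_ge _ h, Finset.Ico_eq_empty (not_lt.mpr h), Finset.sum_empty]

lemma pad_mulVec_diff (c x : Fin d → ℝ) {n : ℕ} (hn : n < d) :
    pad ((Smat c).mulVec x) n - pad ((Smat c).mulVec x) (n + 1) = pad (fun j => c j * x j) n := by
  rw [pad_mulVec, pad_mulVec, Finset.sum_Ico_eq_sub _ hn.le, Finset.sum_Ico_eq_sub _ hn,
    Finset.sum_range_succ]
  ring

-- the standard simplex
def simplexSet (d : ℕ) : Set (Fin d → ℝ) := {x | (∀ i, 0 ≤ x i) ∧ ∑ i, x i ≤ 1}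

-- the sorted cell: antitone part of the polytope, described by generic weights c
def Tset (c : Fin d → ℝ) : Set (Fin d → ℝ) :=
  {a | Antitone a ∧ (∀ i, 0 ≤ a i) ∧
    ∑ n ∈ Finset.range d, pad (fun j => (c j)⁻¹) n * (pad a n - pad a (n + 1)) ≤ 1}

lemma image_simplex (c : Fin d → ℝ) (hc : ∀ j, 0 < c j) :
    (fun x => (Smat c).mulVec x) '' simplexSet d = Tset c := by
  apply Set.Subset.antisymm
  · rintro _ ⟨x, ⟨hx0, hx1⟩, rfl⟩
    have hq : ∀ n, 0 ≤ pad (fun j => c j * x j) n :=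
      pad_nonneg (fun j => mul_nonneg (hc j).le (hx0 j))
    refine ⟨?_, ?_, ?_⟩
    · intro i i' h
      dsimp only
      rw [mulVec_eq_sum, mulVec_eq_sum]
      apply Finset.sum_le_sum_of_subset_of_nonneg (Finset.Ico_subset_Ico (show (i:ℕ) ≤ (i':ℕ) from h) le_rfl)
      intro n _ _; exact hq n
    · intro i
      dsimp only
      rw [mulVec_eq_sum]
      exact Finset.sum_nonneg fun n _ => hq n
    · have : ∀ n ∈ Finset.range d,
          pad (fun j => (c j)⁻¹) n *
            (pad ((Smat c).mulVec x) n - pad ((Smat c).mulVec x) (n + 1)) = pad x n := by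
        intro n hn
        have hnd : n < d := Finset.mem_range.mp hn
        rw [pad_mulVec_diff _ _ hnd, pad_lt _ hnd, pad_lt _ hnd, pad_lt _ hnd]
        exact inv_mul_cancel_left₀ (hc _).ne' _
      rw [Finset.sum_congr rfl this, ← Fin.sum_univ_eq_sum_range (pad x) d]
      calc ∑ i : Fin d, pad x (i : ℕ) = ∑ i, x i := by
            apply Finset.sum_congr rfl; intro j _; rw [pad_lt _ j.isLt, Fin.eta]
        _ ≤ 1 := hx1
  · rintro a ⟨hmono, h0, hsum⟩
    set x : Fin d → ℝ := fun j => (c j)⁻¹ * (a j - pad a ((j : ℕ) + 1)) with hxdef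
    have hdiff : ∀ j : Fin d, 0 ≤ a j - pad a ((j : ℕ) + 1) := by
      intro j
      rcases lt_or_ge ((j : ℕ) + 1) d with h | h
      · rw [pad_lt _ h]
        have : j ≤ (⟨(j : ℕ) + 1, h⟩ : Fin d) := by simp [Fin.le_def]
        linarith [hmono this]
      · rw [pad_ge _ h]; simpa using h0 j
    have hxpad : ∀ n, pad (fun j => c j * x j) n = pad a n - pad a (n + 1) := by
      intro n
      rcases lt_or_ge n d with h | h
      · rw [pad_lt _ h, pad_lt (a := a) h]
        simp only [hxdef]
        rw [mul_inv_cancel_left₀ (hc _).ne']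
      · rw [pad_ge _ h, pad_ge a h, pad_ge a (h.trans (Nat.le_succ n))]; ring
    refine ⟨x, ⟨?_, ?_⟩, ?_⟩
    · intro j; exact mul_nonneg (inv_nonneg.mpr (hc j).le) (hdiff j)
    · calc ∑ j, x j = ∑ n ∈ Finset.range d, pad x n := by
            rw [← Fin.sum_univ_eq_sum_range (pad x) d]
            apply Finset.sum_congr rfl; intro j _; rw [pad_lt _ j.isLt, Fin.eta]
        _ = ∑ n ∈ Finset.range d, pad (fun j => (c j)⁻¹) n * (pad a n - pad a (n + 1)) := by
            apply Finset.sum_congr rfl; intro n hn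
            have hnd : n < d := Finset.mem_range.mp hn
            rw [pad_lt _ hnd, pad_lt _ hnd, pad_lt _ hnd]
        _ ≤ 1 := hsum
    · funext i
      dsimp only
      rw [mulVec_eq_sum]
      have : ∀ k ∈ Finset.Ico i.1 d, pad (fun j => c j * x j) k = pad a k - pad a (k+1) :=
        fun k _ => hxpad k
      rw [Finset.sum_congr rfl this, Finset.sum_Ico_eq_sub _ i.isLt.le,
        Finset.sum_range_sub' (pad a), Finset.sum_range_sub' (pad a),
        pad_ge a le_rfl, pad_lt a i.isLt, Fin.eta]
      ring


-- determinant of Smat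
lemma det_Smat (c : Fin d → ℝ) : (Smat c).det = ∏ j, c j := by
  rw [Matrix.det_of_upperTriangular]
  · exact Finset.prod_congr rfl fun i _ => if_pos le_rfl
  · intro i j hij
    exact if_neg (not_le.mpr hij)

lemma volume_mulVec_image (c : Fin d → ℝ) (hc : ∀ j, 0 < c j) (s : Set (Fin d → ℝ)) :
    volume ((fun x => (Smat c).mulVec x) '' s) = ENNReal.ofReal (∏ j, c j) * volume s := by
  have h1 : (fun x => (Smat c).mulVec x) = ⇑(Matrix.toLin' (Smat c)) := by
    funext x; rw [Matrix.toLin'_apply]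
  rw [h1, Measure.addHaar_image_linearMap, LinearMap.det_toLin', det_Smat,
    abs_of_pos (Finset.prod_pos fun j _ => hc j)]

-- antitone set measurable
lemma measurableSet_antitone : MeasurableSet {a : Fin d → ℝ | Antitone a} := by
  have : {a : Fin d → ℝ | Antitone a}
      = ⋂ (i : Fin d) (j : Fin d) (_ : i ≤ j), {a : Fin d → ℝ | a j ≤ a i} := by
    ext a
    simp only [Set.mem_setOf_eq, Set.mem_iInter, Antitone]
  rw [this]
  exact MeasurableSet.iInter fun i => MeasurableSet.iInter fun j => MeasurableSet.iInter
    fun _ => measurableSet_le (measurable_pi_apply j) (measurable_pi_apply i)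

lemma measurePreserving_comp_perm (σ : Equiv.Perm (Fin d)) :
    MeasurePreserving (fun a : Fin d → ℝ => a ∘ σ) volume volume := by
  have h := measurePreserving_piCongrLeft (fun _ : Fin d => (volume : Measure ℝ)) σ.symm
  have e : ⇑(MeasurableEquiv.piCongrLeft (fun _ : Fin d => ℝ) σ.symm)
      = fun a : Fin d → ℝ => a ∘ σ := by
    funext a; ext i; simp [MeasurableEquiv.piCongrLeft, Equiv.piCongrLeft]
  rw [e] at h
  exact h

lemma exists_sort (a : Fin d → ℝ) : ∃ σ : Equiv.Perm (Fin d), Antitone (a ∘ σ) := by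
  refine ⟨Tuple.sort (fun i => -a i), fun i j h => ?_⟩
  have := Tuple.monotone_sort (fun i => -a i) h
  simpa using this

lemma unique_sort {a : Fin d → ℝ} (ha : Function.Injective a) {σ τ : Equiv.Perm (Fin d)}
    (hσ : Antitone (a ∘ σ)) (hτ : Antitone (a ∘ τ)) : σ = τ := by
  have hsa : ∀ ρ : Equiv.Perm (Fin d), Antitone (a ∘ ρ) → StrictAnti (a ∘ ρ) := by
    intro ρ hρ i j hij
    refine lt_of_le_of_ne (hρ hij.le) fun e => ?_
    exact hij.ne' (ρ.injective (ha e))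
  have hrev : StrictAnti (Fin.rev : Fin d → Fin d) := fun i j h => Fin.rev_lt_rev.mpr h
  have m1 : StrictMono ((a ∘ σ) ∘ Fin.rev) := fun i j h => (hsa σ hσ) (hrev h)
  have m2 : StrictMono ((a ∘ τ) ∘ Fin.rev) := fun i j h => (hsa τ hτ) (hrev h)
  have hr : ∀ ρ : Equiv.Perm (Fin d), Set.range ((a ∘ ρ) ∘ Fin.rev) = Set.range a := by
    intro ρ
    have h1 : Set.range (Fin.rev : Fin d → Fin d) = Set.univ :=
      Fin.rev_surjective.range_eq
    rw [Set.range_comp, h1, Set.image_univ, Set.range_comp, ρ.surjective.range_eq,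
      Set.image_univ]
  have heq := (m1.range_inj m2).mp ((hr σ).trans (hr τ).symm)
  apply Equiv.ext
  intro i
  apply ha
  have := congrFun heq (Fin.rev i)
  simpa [Fin.rev_rev] using this

lemma null_ties : volume {a : Fin d → ℝ | ¬ Function.Injective a} = 0 := by
  have hsub : {a : Fin d → ℝ | ¬ Function.Injective a}
      ⊆ ⋃ (i : Fin d) (j : Fin d) (_ : i ≠ j), {a : Fin d → ℝ | a i = a j} := by
    intro a ha
    simp only [Set.mem_setOf_eq, Function.Injective, not_forall] at ha
    obtain ⟨i, j, hij, hne⟩ := ha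
    exact Set.mem_iUnion.2 ⟨i, Set.mem_iUnion.2 ⟨j, Set.mem_iUnion.2 ⟨hne, hij⟩⟩⟩
  refine measure_mono_null hsub ?_
  refine measure_iUnion_null fun i => measure_iUnion_null fun j => measure_iUnion_null fun hij => ?_
  have hker : {a : Fin d → ℝ | a i = a j}
      = (LinearMap.ker ((LinearMap.proj i : (Fin d → ℝ) →ₗ[ℝ] ℝ) - LinearMap.proj j) :
          Submodule ℝ (Fin d → ℝ)) := by
    ext a
    simp [LinearMap.mem_ker, sub_eq_zero]
  rw [hker]
  apply Measure.addHaar_submodule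
  intro htop
  have h1 : (Pi.single i 1 : Fin d → ℝ) ∈ LinearMap.ker
      ((LinearMap.proj i : (Fin d → ℝ) →ₗ[ℝ] ℝ) - LinearMap.proj j) := by
    rw [htop]; trivial
  simp only [LinearMap.mem_ker, LinearMap.sub_apply, LinearMap.proj_apply] at h1
  rw [Pi.single_eq_same, Pi.single_eq_of_ne (Ne.symm hij)] at h1
  norm_num at h1



lemma volume_eq_card_mul (A : Set (Fin d → ℝ)) (hA : MeasurableSet A)
    (hs : ∀ σ : Equiv.Perm (Fin d), ∀ a ∈ A, a ∘ σ ∈ A) :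
    volume A = (d.factorial : ENNReal) * volume (A ∩ {a | Antitone a}) := by
  set D : Equiv.Perm (Fin d) → Set (Fin d → ℝ) :=
    fun σ => A ∩ {a | Antitone (a ∘ σ)} with hD
  have hDm : ∀ σ, MeasurableSet (D σ) := by
    intro σ
    refine hA.inter ?_
    have : {a : Fin d → ℝ | Antitone (a ∘ σ)}
        = (fun a : Fin d → ℝ => a ∘ σ) ⁻¹' {a | Antitone a} := rfl
    rw [this]
    exact (measurePreserving_comp_perm σ).measurable measurableSet_antitone
  have hcover : A = ⋃ σ ∈ (Finset.univ : Finset (Equiv.Perm (Fin d))), D σ := by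
    ext a
    simp only [Set.mem_iUnion, Finset.mem_univ, exists_prop, true_and, hD,
      Set.mem_inter_iff, Set.mem_setOf_eq]
    constructor
    · intro ha
      obtain ⟨σ, hσ⟩ := exists_sort a
      exact ⟨σ, ha, hσ⟩
    · rintro ⟨σ, ha, -⟩
      exact ha
  have hdisj : ((Finset.univ : Finset (Equiv.Perm (Fin d))) : Set (Equiv.Perm (Fin d))).Pairwise
      (Function.onFun (AEDisjoint volume) D) := by
    intro σ _ τ _ hne
    refine measure_mono_null ?_ null_ties
    rintro a ⟨⟨-, h1⟩, ⟨-, h2⟩⟩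
    intro hinj
    exact hne (unique_sort hinj h1 h2)
  have hvol : ∀ σ : Equiv.Perm (Fin d), volume (D σ) = volume (A ∩ {a | Antitone a}) := by
    intro σ
    have hpre : D σ = (fun a : Fin d → ℝ => a ∘ σ) ⁻¹' (A ∩ {a | Antitone a}) := by
      ext a
      simp only [hD, Set.mem_inter_iff, Set.mem_preimage, Set.mem_setOf_eq]
      constructor
      · rintro ⟨h1, h2⟩
        exact ⟨hs σ a h1, h2⟩
      · rintro ⟨h1, h2⟩
        refine ⟨?_, h2⟩
        have h3 := hs σ⁻¹ (a ∘ σ) h1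
        have h4 : (a ∘ σ) ∘ ⇑σ⁻¹ = a := by
          funext i
          simp [Function.comp]
        rwa [h4] at h3
    rw [hpre,
      (measurePreserving_comp_perm σ).measure_preimage
        ((hA.inter measurableSet_antitone).nullMeasurableSet)]
  calc volume A = volume (⋃ σ ∈ (Finset.univ : Finset (Equiv.Perm (Fin d))), D σ) := by
        rw [← hcover]
    _ = ∑ σ : Equiv.Perm (Fin d), volume (D σ) :=
        measure_biUnion_finset₀ hdisj fun σ _ => (hDm σ).nullMeasurableSet
    _ = (d.factorial : ENNReal) * volume (A ∩ {a | Antitone a}) := by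
        rw [Finset.sum_congr rfl fun σ _ => hvol σ, Finset.sum_const, Finset.card_univ,
          Fintype.card_perm, Fintype.card_fin, nsmul_eq_mul]

lemma volume_Tset (c : Fin d → ℝ) (hc : ∀ j, 0 < c j) :
    volume (Tset c) = ENNReal.ofReal (∏ j, c j) * volume (simplexSet d) := by
  rw [← image_simplex c hc, volume_mulVec_image c hc]



lemma sum_pad (a : Fin d → ℝ) : ∑ n ∈ Finset.range d, pad a n = ∑ i, a i := by
  rw [← Fin.sum_univ_eq_sum_range (pad a) d]
  exact Finset.sum_congr rfl fun j _ => by rw [pad_lt _ j.isLt, Fin.eta]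

lemma telescope_pad (a : Fin d → ℝ) :
    ∑ n ∈ Finset.range d, (pad a n - pad a (n + 1)) = pad a 0 := by
  rw [Finset.sum_range_sub' (pad a), pad_ge a le_rfl, sub_zero]

-- cube ∩ antitone = Tset 1
lemma cube_inter_antitone (hd : 0 < d) :
    (Set.univ.pi fun _ : Fin d => Set.Icc (0:ℝ) 1) ∩ {a | Antitone a}
      = Tset (fun _ => (1:ℝ)) := by
  have hsum : ∀ a : Fin d → ℝ,
      ∑ n ∈ Finset.range d, pad (fun _ : Fin d => ((1:ℝ))⁻¹) n * (pad a n - pad a (n + 1))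
        = a ⟨0, hd⟩ := by
    intro a
    have : ∀ n ∈ Finset.range d,
        pad (fun _ : Fin d => ((1:ℝ))⁻¹) n * (pad a n - pad a (n + 1))
          = pad a n - pad a (n + 1) := by
      intro n hn
      rw [pad_lt _ (Finset.mem_range.mp hn)]
      norm_num
    rw [Finset.sum_congr rfl this, telescope_pad, pad_lt a hd]
  ext a
  simp only [Set.mem_inter_iff, Set.mem_pi, Set.mem_univ, forall_true_left, Set.mem_Icc,
    Set.mem_setOf_eq, Tset, hsum a]
  constructor
  · rintro ⟨h1, h2⟩
    exact ⟨h2, fun i => (h1 i).1, (h1 ⟨0, hd⟩).2⟩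
  · rintro ⟨h1, h2, h3⟩
    refine ⟨fun i => ⟨h2 i, ?_⟩, h1⟩
    exact le_trans (h1 (show (⟨0, hd⟩ : Fin d) ≤ i from by simp [Fin.le_def])) h3

lemma volume_cube : volume (Set.univ.pi fun _ : Fin d => Set.Icc (0:ℝ) 1) = 1 := by
  rw [volume_pi_pi]
  simp [Real.volume_Icc]

lemma volume_simplex (hd : 0 < d) :
    volume (simplexSet d) = ((d.factorial : ENNReal))⁻¹ := by
  have hfac : ((d.factorial : ENNReal)) ≠ 0 := by
    simp [Nat.factorial_ne_zero]
  have hfac' : ((d.factorial : ENNReal)) ≠ ⊤ := ENNReal.natCast_ne_top _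
  have h1 : (1 : ENNReal) = (d.factorial : ENNReal) * volume (simplexSet d) := by
    have hsymm : ∀ σ : Equiv.Perm (Fin d), ∀ a ∈ (Set.univ.pi fun _ : Fin d => Set.Icc (0:ℝ) 1),
        a ∘ σ ∈ (Set.univ.pi fun _ : Fin d => Set.Icc (0:ℝ) 1) := by
      intro σ a ha
      intro i _
      exact ha (σ i) trivial
    have := volume_eq_card_mul (Set.univ.pi fun _ : Fin d => Set.Icc (0:ℝ) 1)
      (MeasurableSet.univ_pi fun _ => measurableSet_Icc) hsymm
    rw [volume_cube, cube_inter_antitone hd, volume_Tset _ (fun _ => one_pos)] at this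
    simpa using this
  rw [← one_mul (volume (simplexSet d)), ← ENNReal.inv_mul_cancel hfac hfac', mul_assoc, ← h1,
    mul_one]

def Scan (d : ℕ) (β : ℝ) : Set (Fin d → ℝ) :=
  {a | ∀ i, 0 ≤ a i ∧ (β⁻¹ - 1) * a i + ∑ j, a j ≤ 1}

lemma abel (r : ℝ) (P : ℕ → ℝ) (m : ℕ) :
    ∑ n ∈ Finset.range m, (r + n) * (P n - P (n + 1))
      = r * (P 0 - P m) + (∑ n ∈ Finset.range m, P n) - P 0 + P m - m * P m := by
  induction m with
  | zero => simp
  | succ k ih =>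
      rw [Finset.sum_range_succ, ih, Finset.sum_range_succ]
      push_cast
      ring

lemma Scan_measurable (β : ℝ) : MeasurableSet (Scan d β) := by
  have : Scan d β = ⋂ i : Fin d,
      ({a : Fin d → ℝ | 0 ≤ a i} ∩ {a : Fin d → ℝ | (β⁻¹ - 1) * a i + ∑ j, a j ≤ 1}) := by
    ext a
    simp only [Scan, Set.mem_setOf_eq, Set.mem_iInter, Set.mem_inter_iff]
  rw [this]
  refine MeasurableSet.iInter fun i => MeasurableSet.inter ?_ ?_
  · exact measurableSet_le measurable_const (measurable_pi_apply i)
  · refine measurableSet_le ?_ measurable_const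
    exact (((measurable_pi_apply i).const_mul _).add
      (Finset.measurable_sum Finset.univ fun j _ => measurable_pi_apply j))

lemma Scan_symm (β : ℝ) (σ : Equiv.Perm (Fin d)) (a : Fin d → ℝ) (ha : a ∈ Scan d β) :
    a ∘ σ ∈ Scan d β := by
  intro i
  have hsum : ∑ j, a (σ j) = ∑ j, a j := Equiv.sum_comp σ a
  refine ⟨(ha (σ i)).1, ?_⟩
  simpa [Function.comp, hsum] using (ha (σ i)).2

lemma Scan_inter_antitone (hd : 0 < d) {β : ℝ} (hβ0 : 0 < β) (hβ1 : β ≤ 1) :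
    Scan d β ∩ {a | Antitone a} = Tset (fun j : Fin d => (β⁻¹ + (j : ℕ))⁻¹) := by
  have hβinv : 1 ≤ β⁻¹ := (one_le_inv₀ hβ0).mpr hβ1
  have hsum : ∀ a : Fin d → ℝ,
      ∑ n ∈ Finset.range d,
          pad (fun j : Fin d => (((β⁻¹ + (j : ℕ))⁻¹ : ℝ))⁻¹) n * (pad a n - pad a (n + 1))
        = (β⁻¹ - 1) * a ⟨0, hd⟩ + ∑ j, a j := by
    intro a
    have h1 : ∀ n ∈ Finset.range d,
        pad (fun j : Fin d => (((β⁻¹ + (j : ℕ))⁻¹ : ℝ))⁻¹) n * (pad a n - pad a (n + 1))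
          = (β⁻¹ + n) * (pad a n - pad a (n + 1)) := by
      intro n hn
      rw [pad_lt _ (Finset.mem_range.mp hn)]
      simp
    rw [Finset.sum_congr rfl h1, abel β⁻¹ (pad a) d, pad_ge a le_rfl, sum_pad,
      pad_lt a hd]
    ring
  ext a
  simp only [Set.mem_inter_iff, Set.mem_setOf_eq, Tset, Scan, hsum a]
  constructor
  · rintro ⟨h1, h2⟩
    exact ⟨h2, fun i => (h1 i).1, (h1 ⟨0, hd⟩).2⟩
  · rintro ⟨h1, h2, h3⟩
    refine ⟨fun i => ⟨h2 i, ?_⟩, h1⟩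
    have hle : a i ≤ a ⟨0, hd⟩ := h1 (show (⟨0, hd⟩ : Fin d) ≤ i from by simp [Fin.le_def])
    nlinarith [mul_le_mul_of_nonneg_left hle (by linarith : (0:ℝ) ≤ β⁻¹ - 1)]

lemma volume_Scan (hd : 0 < d) {β : ℝ} (hβ0 : 0 < β) (hβ1 : β ≤ 1) :
    volume (Scan d β) = ENNReal.ofReal (∏ i : Fin d, (β⁻¹ + (i : ℕ))⁻¹) := by
  have hfac : ((d.factorial : ENNReal)) ≠ 0 := by simp [Nat.factorial_ne_zero]
  have hfac' : ((d.factorial : ENNReal)) ≠ ⊤ := ENNReal.natCast_ne_top _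
  have hc : ∀ j : Fin d, 0 < ((β⁻¹ + (j : ℕ))⁻¹ : ℝ) := by
    intro j
    have : (0:ℝ) < β⁻¹ := inv_pos.mpr hβ0
    positivity
  rw [volume_eq_card_mul _ (Scan_measurable β) (Scan_symm β),
    Scan_inter_antitone hd hβ0 hβ1, volume_Tset _ hc, volume_simplex hd, ← mul_assoc,
    mul_comm (d.factorial : ENNReal) _, mul_assoc, ENNReal.mul_inv_cancel hfac hfac', mul_one]


end Stmt7Aux

open Stmt7Aux in
/-- The volume of the polytope `S(β,…,β)` equals `∏_{i=1}^d 1/(β⁻¹ + i - 1)`,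
which equals `1/(d! · binom(β⁻¹ + d - 1, d))` (generalized binomial coefficient). -/
theorem stmt7 {d : ℕ} (hd : 0 < d) (β : ℝ) (hβ0 : 0 < β) (hβ1 : β ≤ 1) :
    volume {a : Fin d → ℝ | (∀ i, 0 ≤ a i) ∧ (∑ i, a i) ≤ 1 ∧
        ∀ i, a i + β * ((∑ j, a j) - a i) ≤ β}
      = ENNReal.ofReal (∏ i : Fin d, (β⁻¹ + (i : ℕ))⁻¹)
    ∧ (∏ i : Fin d, (β⁻¹ + (i : ℕ))⁻¹)
      = 1 / ((d.factorial : ℝ) *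
          ((∏ i : Fin d, (β⁻¹ + (d : ℝ) - 1 - (i : ℕ))) / (d.factorial : ℝ))) := by
  constructor
  · have hset : {a : Fin d → ℝ | (∀ i, 0 ≤ a i) ∧ (∑ i, a i) ≤ 1 ∧
        ∀ i, a i + β * ((∑ j, a j) - a i) ≤ β} = Scan d β := by
      have hβb : β⁻¹ * β = 1 := inv_mul_cancel₀ hβ0.ne'
      have hβb' : β * β⁻¹ = 1 := mul_inv_cancel₀ hβ0.ne'
      have hβinv : 1 ≤ β⁻¹ := (one_le_inv₀ hβ0).mpr hβ1
      ext a
      simp only [Set.mem_setOf_eq, Scan]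
      constructor
      · rintro ⟨h0, -, h2⟩
        intro i
        refine ⟨h0 i, ?_⟩
        have h3 := mul_le_mul_of_nonneg_left (h2 i) (inv_nonneg.mpr hβ0.le)
        have e : β⁻¹ * (a i + β * ((∑ j, a j) - a i))
            = β⁻¹ * a i + (β⁻¹ * β) * ((∑ j, a j) - a i) := by ring
        rw [e, hβb] at h3
        linarith
      · intro h
        have h0 : ∀ i, 0 ≤ a i := fun i => (h i).1
        have h2 : ∀ i, a i + β * ((∑ j, a j) - a i) ≤ β := by
          intro i
          have h3 := mul_le_mul_of_nonneg_left (h i).2 hβ0.le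
          have e : β * ((β⁻¹ - 1) * a i + ∑ j, a j)
              = (β * β⁻¹) * a i - β * a i + β * ∑ j, a j := by ring
          rw [e, hβb'] at h3
          linarith
        have h1 : ∑ i, a i ≤ 1 := by
          have := (h ⟨0, hd⟩).2
          nlinarith [mul_nonneg (by linarith : (0:ℝ) ≤ β⁻¹ - 1) (h0 ⟨0, hd⟩)]
        exact ⟨h0, h1, h2⟩
    rw [hset]
    exact volume_Scan hd hβ0 hβ1
  · have hprod : ∏ i : Fin d, (β⁻¹ + (d : ℝ) - 1 - (i : ℕ)) = ∏ i : Fin d, (β⁻¹ + (i : ℕ)) := by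
      rw [Fin.prod_univ_eq_prod_range (fun n => β⁻¹ + (d : ℝ) - 1 - n) d,
        Fin.prod_univ_eq_prod_range (fun n => β⁻¹ + (n : ℝ)) d,
        ← Finset.prod_range_reflect (fun n => β⁻¹ + (n : ℝ)) d]
      refine Finset.prod_congr rfl fun n hn => ?_
      have hnd : n < d := Finset.mem_range.mp hn
      have : ((d - 1 - n : ℕ) : ℝ) = (d : ℝ) - 1 - n := by
        have h1 : 1 + n ≤ d := by omega
        rw [Nat.sub_sub, Nat.cast_sub h1]
        push_cast
        ring
      rw [this]
      ring
    have hpos : (0:ℝ) < ∏ i : Fin d, (β⁻¹ + (i : ℕ)) := by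
      refine Finset.prod_pos fun i _ => ?_
      have : (0:ℝ) < β⁻¹ := inv_pos.mpr hβ0
      positivity
    have hfac : (d.factorial : ℝ) ≠ 0 := Nat.cast_ne_zero.mpr d.factorial_ne_zero
    rw [hprod, Finset.prod_inv_distrib, mul_comm, div_mul_cancel₀ _ hfac, one_div]
end

section
/- Let G be an s-uniform hypergraph with edge set E(G_p) partitioned vertex-wise into classes V₁,…,V_r where each edge uses exactly m_i vertices of class V_i (s = m₁+…+m_r), and let M = |E| > 0 be its number of edges. Define, for a probability mass function μ on E and vertex V, μ(V) = Σ_{S ∋ V} μ(S), and ν*(μ) = ∏_V μ(V)^{−μ(V)/s}. Then max_μ ν*(μ) ≥ (∏_{i=1}^r (m_i!/m_i^{m_i}) · M)^{1/s}. -/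
open Finset

/-- `k! · e_k(x) ≤ (∑ x)^k` for nonnegative `x`. -/
private lemma factorial_mul_esymm_le {α : Type*} [DecidableEq α] (t : Finset α) (x : α → ℝ)
    (hx : ∀ a ∈ t, 0 ≤ x a) (k : ℕ) :
    (k.factorial : ℝ) * ∑ A ∈ t.powersetCard k, ∏ a ∈ A, x a ≤ (∑ a ∈ t, x a) ^ k := by
  induction k with
  | zero => simp
  | succ k ih =>
    have hsum : 0 ≤ ∑ a ∈ t, x a := Finset.sum_nonneg hx
    have key : ∑ B ∈ t.powersetCard (k+1), (((k:ℝ)+1) * ∏ a ∈ B, x a)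
        = ∑ A ∈ t.powersetCard k, ∑ v ∈ t \ A, (x v * ∏ a ∈ A, x a) := by
      have h1 : ∀ B ∈ t.powersetCard (k+1), ((k:ℝ)+1) * ∏ a ∈ B, x a
          = ∑ v ∈ B, x v * ∏ a ∈ B.erase v, x a := by
        intro B hB
        rw [Finset.mem_powersetCard] at hB
        rw [Finset.sum_congr rfl (fun v hv => Finset.mul_prod_erase B x hv),
          Finset.sum_const, hB.2]
        push_cast
        ring
      rw [Finset.sum_congr rfl h1, Finset.sum_sigma', Finset.sum_sigma']
      refine Finset.sum_nbij' (fun p => ⟨p.1.erase p.2, p.2⟩)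
        (fun p => ⟨insert p.2 p.1, p.2⟩) ?_ ?_ ?_ ?_ ?_
      · rintro ⟨B, v⟩ hp
        simp only [Finset.mem_sigma, Finset.mem_powersetCard] at hp ⊢
        obtain ⟨⟨hBt, hBc⟩, hv⟩ := hp
        refine ⟨⟨(Finset.erase_subset _ _).trans hBt, by
          rw [Finset.card_erase_of_mem hv, hBc]; rfl⟩, ?_⟩
        simp [Finset.mem_sdiff, hBt hv]
      · rintro ⟨A, v⟩ hp
        simp only [Finset.mem_sigma, Finset.mem_powersetCard, Finset.mem_sdiff] at hp ⊢
        obtain ⟨⟨hAt, hAc⟩, hv, hvA⟩ := hp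
        exact ⟨⟨Finset.insert_subset hv hAt, by rw [Finset.card_insert_of_notMem hvA, hAc]⟩,
          Finset.mem_insert_self _ _⟩
      · rintro ⟨B, v⟩ hp
        simp only [Finset.mem_sigma] at hp
        simp [Finset.insert_erase hp.2]
      · rintro ⟨A, v⟩ hp
        simp only [Finset.mem_sigma, Finset.mem_sdiff] at hp
        simp [Finset.erase_insert hp.2.2]
      · rintro ⟨B, v⟩ hp
        rfl
    have hnn : ∀ A ∈ t.powersetCard k, 0 ≤ ∏ a ∈ A, x a := by
      intro A hA
      rw [Finset.mem_powersetCard] at hA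
      exact Finset.prod_nonneg fun a ha => hx a (hA.1 ha)
    have step : ∑ A ∈ t.powersetCard k, ∑ v ∈ t \ A, (x v * ∏ a ∈ A, x a)
        ≤ (∑ a ∈ t, x a) * ∑ A ∈ t.powersetCard k, ∏ a ∈ A, x a := by
      rw [Finset.mul_sum]
      refine Finset.sum_le_sum fun A hA => ?_
      rw [← Finset.sum_mul]
      refine mul_le_mul_of_nonneg_right ?_ (hnn A hA)
      exact Finset.sum_le_sum_of_subset_of_nonneg (Finset.sdiff_subset) fun v hv _ => hx v hv
    calc ((k+1).factorial : ℝ) * ∑ A ∈ t.powersetCard (k+1), ∏ a ∈ A, x a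
        = (k.factorial : ℝ) * ∑ B ∈ t.powersetCard (k+1), (((k:ℝ)+1) * ∏ a ∈ B, x a) := by
          rw [Finset.mul_sum, Finset.mul_sum, Nat.factorial_succ]
          push_cast
          simp only [← mul_assoc]
          congr 1
          ext B
          ring
      _ = (k.factorial : ℝ) * ∑ A ∈ t.powersetCard k, ∑ v ∈ t \ A, (x v * ∏ a ∈ A, x a) := by
          rw [key]
      _ ≤ (k.factorial : ℝ) * ((∑ a ∈ t, x a) * ∑ A ∈ t.powersetCard k, ∏ a ∈ A, x a) := by
          exact mul_le_mul_of_nonneg_left step (by positivity)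
      _ = (∑ a ∈ t, x a) * ((k.factorial : ℝ) * ∑ A ∈ t.powersetCard k, ∏ a ∈ A, x a) := by ring
      _ ≤ (∑ a ∈ t, x a) * (∑ a ∈ t, x a) ^ k := mul_le_mul_of_nonneg_left ih hsum
      _ = (∑ a ∈ t, x a) ^ (k+1) := by ring

/-- Entropy lower bound on the fractional packing quantity `ν*`: for an `s`-uniform
multipartite hypergraph whose every edge has exactly `m i` vertices in class `i`
(`s = Σ m i`) and `M = |E| > 0` edges, there is a probability distribution `μ` on the
edges with `ν*(μ) = ∏_V μ(V)^{−μ(V)/s} ≥ (∏_i (m_i!/m_i^{m_i}) · M)^{1/s}`,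
where `μ(V) = Σ_{S ∋ V} μ(S)`. -/
theorem stmt15 {V : Type*} [Fintype V] [DecidableEq V] {r : ℕ}
    (cls : V → Fin r) (m : Fin r → ℕ) (hm : ∀ i, 0 < m i)
    (s : ℕ) (hs : s = ∑ i, m i)
    (E : Finset (Finset V)) (hE : E.Nonempty)
    (hunif : ∀ S ∈ E, ∀ i, (S.filter fun v => cls v = i).card = m i) :
    ∃ μ : Finset V → ℝ, (∀ S, 0 ≤ μ S) ∧ (∑ S ∈ E, μ S = 1) ∧ (∀ S ∉ E, μ S = 0) ∧
      ((∏ i : Fin r, ((m i).factorial : ℝ) / ((m i : ℝ)) ^ (m i)) * (E.card : ℝ))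
          ^ ((1 : ℝ) / s)
        ≤ ∏ v : V, (∑ S ∈ E.filter (fun S => v ∈ S), μ S)
            ^ (-(∑ S ∈ E.filter (fun S => v ∈ S), μ S) / s) := by
  classical
  set M : ℕ := E.card with hMdef
  have hM : 0 < M := Finset.card_pos.mpr hE
  have hMR : (0:ℝ) < M := by exact_mod_cast hM
  refine ⟨fun S => if S ∈ E then (M:ℝ)⁻¹ else 0, ?_, ?_, ?_, ?_⟩
  · intro S
    dsimp only
    split <;> positivity
  · rw [Finset.sum_congr rfl (fun S hS => if_pos hS), Finset.sum_const, nsmul_eq_mul]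
    field_simp
    rfl
  · intro S hS; exact if_neg hS
  · -- main inequality
    set d : V → ℕ := fun v => (E.filter (fun S => v ∈ S)).card with hd
    have hμv : ∀ v : V, (∑ S ∈ E.filter (fun S => v ∈ S),
        if S ∈ E then (M:ℝ)⁻¹ else 0) = (d v : ℝ)/M := by
      intro v
      rw [Finset.sum_congr rfl (fun S hS => if_pos (Finset.mem_of_mem_filter S hS)),
        Finset.sum_const, nsmul_eq_mul, div_eq_mul_inv]
    simp only [hμv]
    rcases Nat.eq_zero_or_pos s with hs0 | hspos
    · subst hs0
      simp only [Nat.cast_zero, div_zero, neg_div, neg_zero, Real.rpow_zero,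
        Finset.prod_const_one, le_refl]
    have hsR : (0:ℝ) < s := by exact_mod_cast hspos
    set C : ℝ := ∏ i : Fin r, ((m i).factorial : ℝ) / ((m i : ℝ)) ^ (m i) with hC
    have hmR : ∀ i, (0:ℝ) < m i := fun i => by exact_mod_cast hm i
    have hC0 : 0 < C := Finset.prod_pos fun i _ =>
      div_pos (by exact_mod_cast (m i).factorial_pos) (by have := hmR i; positivity)
    -- class sums of degrees
    set Ci : Fin r → Finset V := fun i => Finset.univ.filter (fun v => cls v = i) with hCi
    have hd_class : ∀ i, ∑ v ∈ Ci i, d v = m i * M := by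
      intro i
      have : ∀ v, d v = ∑ S ∈ E, if v ∈ S then 1 else 0 := fun v =>
        Finset.card_filter _ _
      rw [Finset.sum_congr rfl fun v _ => this v, Finset.sum_comm]
      rw [Finset.sum_congr rfl (fun S hS => ?_), Finset.sum_const, smul_eq_mul, mul_comm]
      have : Finset.filter (fun v => v ∈ S) (Ci i) = S.filter (fun v => cls v = i) := by
        ext v
        simp only [hCi, Finset.mem_filter, Finset.mem_univ, true_and]
        tauto
      rw [← Finset.sum_filter, this, Finset.sum_const, hunif S hS i, smul_eq_mul, mul_one]
    set q : V → ℝ := fun v => (d v : ℝ) / (m (cls v) * M) with hq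
    have hq0 : ∀ v, 0 ≤ q v := fun v =>
      div_nonneg (Nat.cast_nonneg _) (mul_nonneg (Nat.cast_nonneg _) (Nat.cast_nonneg _))
    have hq_sum : ∀ i, ∑ v ∈ Ci i, q v = 1 := by
      intro i
      have h1 : ∀ v ∈ Ci i, q v = (d v : ℝ) / (m i * M) := by
        intro v hv
        simp only [hCi, Finset.mem_filter] at hv
        simp only [hq, hv.2]
      rw [Finset.sum_congr rfl h1, ← Finset.sum_div]
      have h2 : ∑ v ∈ Ci i, (d v : ℝ) = (m i : ℝ) * M := by
        rw [← Nat.cast_sum, hd_class i]; push_cast; ring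
      rw [h2, div_self (by have h3 := hmR i; positivity)]
    -- step (a): injection into product of symmetric sums
    have inj_step : (∑ S ∈ E, ∏ v ∈ S, q v)
        ≤ ∏ i : Fin r, ∑ A ∈ (Ci i).powersetCard (m i), ∏ v ∈ A, q v := by
      rw [Finset.prod_univ_sum]
      set e : Finset V → (Fin r → Finset V) :=
        fun S => fun i => S.filter (fun v => cls v = i) with he
      have hmem : ∀ S ∈ E, e S ∈ Fintype.piFinset
          (fun i => (Ci i).powersetCard (m i)) := by
        intro S hS
        rw [Fintype.mem_piFinset]
        intro i
        rw [Finset.mem_powersetCard]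
        constructor
        · intro v hv
          simp only [he, Finset.mem_filter] at hv
          simp only [hCi, Finset.mem_filter, Finset.mem_univ, true_and, hv.2]
        · exact hunif S hS i
      have hinj : ∀ S ∈ E, ∀ T ∈ E, e S = e T → S = T := by
        intro S _ T _ hST
        ext v
        have h := congrFun hST (cls v)
        simp only [he] at h
        constructor
        · intro hv
          have hv2 : v ∈ S.filter (fun w => cls w = cls v) := by
            simp [Finset.mem_filter, hv]
          rw [h] at hv2
          exact (Finset.mem_filter.mp hv2).1
        · intro hv
          have hv2 : v ∈ T.filter (fun w => cls w = cls v) := by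
            simp [Finset.mem_filter, hv]
          rw [← h] at hv2
          exact (Finset.mem_filter.mp hv2).1
      have hval : ∀ S ∈ E, ∏ v ∈ S, q v = ∏ i : Fin r, ∏ v ∈ e S i, q v := by
        intro S _
        exact (Finset.prod_fiberwise_of_maps_to (fun v _ => Finset.mem_univ (cls v)) q).symm
      calc (∑ S ∈ E, ∏ v ∈ S, q v)
          = ∑ S ∈ E, ∏ i : Fin r, ∏ v ∈ e S i, q v := Finset.sum_congr rfl hval
        _ = ∑ p ∈ E.image e, ∏ i : Fin r, ∏ v ∈ p i, q v := by
            rw [Finset.sum_image hinj]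
        _ ≤ ∑ p ∈ Fintype.piFinset (fun i => (Ci i).powersetCard (m i)),
              ∏ i : Fin r, ∏ v ∈ p i, q v := by
            refine Finset.sum_le_sum_of_subset_of_nonneg ?_ ?_
            · intro p hp
              obtain ⟨S, hS, rfl⟩ := Finset.mem_image.mp hp
              exact hmem S hS
            · intro p _ _
              exact Finset.prod_nonneg fun i _ => Finset.prod_nonneg fun v _ => hq0 v
    -- step (b): symmetric sum bound
    have sym_step : ∀ i : Fin r, ∑ A ∈ (Ci i).powersetCard (m i), ∏ v ∈ A, q v
        ≤ (((m i).factorial : ℝ))⁻¹ := by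
      intro i
      have h := factorial_mul_esymm_le (Ci i) q (fun v _ => hq0 v) (m i)
      rw [hq_sum i, one_pow] at h
      have hfac : (0:ℝ) < ((m i).factorial : ℝ) := by
        exact_mod_cast (m i).factorial_pos
      rw [inv_eq_one_div, le_div_iff₀ hfac]
      linarith [h]
    have hsym_nonneg : ∀ i : Fin r, 0 ≤ ∑ A ∈ (Ci i).powersetCard (m i), ∏ v ∈ A, q v := by
      intro i
      refine Finset.sum_nonneg fun A hA => Finset.prod_nonneg fun v hv => hq0 v
    have key_count : (∑ S ∈ E, ∏ v ∈ S, q v) ≤ ∏ i : Fin r, (((m i).factorial : ℝ))⁻¹ :=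
      inj_step.trans (Finset.prod_le_prod (fun i _ => hsym_nonneg i) (fun i _ => sym_step i))
    -- step (c): AM-GM
    have hz0 : ∀ S ∈ E, (0:ℝ) ≤ ∏ v ∈ S, q v :=
      fun S _ => Finset.prod_nonneg fun v _ => hq0 v
    have amgm : ∏ S ∈ E, (∏ v ∈ S, q v) ^ ((M:ℝ)⁻¹)
        ≤ ∑ S ∈ E, (M:ℝ)⁻¹ * (∏ v ∈ S, q v) := by
      refine Real.geom_mean_le_arith_mean_weighted E (fun _ => (M:ℝ)⁻¹) _
        (fun S _ => by positivity) ?_ hz0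
      rw [Finset.sum_const, nsmul_eq_mul]
      field_simp
      rfl
    have amgm2 : ∏ S ∈ E, (∏ v ∈ S, q v) ^ ((M:ℝ)⁻¹)
        ≤ (M:ℝ)⁻¹ * ∏ i : Fin r, (((m i).factorial : ℝ))⁻¹ := by
      refine amgm.trans ?_
      rw [← Finset.mul_sum]
      exact mul_le_mul_of_nonneg_left key_count (by positivity)
    -- step (d): the product over edges equals product over vertices
    have edge_prod : ∏ S ∈ E, ∏ v ∈ S, q v = ∏ v : V, q v ^ (d v) := by
      have h1 : ∀ S : Finset V, ∏ v ∈ S, q v = ∏ v : V, if v ∈ S then q v else 1 := by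
        intro S
        rw [Finset.prod_ite, Finset.prod_const_one, mul_one,
          Finset.filter_mem_eq_inter, Finset.univ_inter]
      rw [Finset.prod_congr rfl fun S _ => h1 S, Finset.prod_comm]
      refine Finset.prod_congr rfl fun v _ => ?_
      rw [Finset.prod_ite, Finset.prod_const_one, mul_one, Finset.prod_const, hd]
    -- P := ∏ q v ^ (d v / M)
    have hP_eq : ∏ v : V, q v ^ ((d v : ℝ)/M) = ∏ S ∈ E, (∏ v ∈ S, q v) ^ ((M:ℝ)⁻¹) := by
      rw [Real.finset_prod_rpow E _ hz0, edge_prod, ← Real.finset_prod_rpow Finset.univ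
        (fun v => q v ^ (d v)) (fun v _ => pow_nonneg (hq0 v) _)]
      refine Finset.prod_congr rfl fun v _ => ?_
      rw [← Real.rpow_natCast (q v) (d v), ← Real.rpow_mul (hq0 v), div_eq_mul_inv]
    have hP_le : ∏ v : V, q v ^ ((d v : ℝ)/M)
        ≤ (M:ℝ)⁻¹ * ∏ i : Fin r, (((m i).factorial : ℝ))⁻¹ := by
      rw [hP_eq]; exact amgm2
    -- now assemble
    set μv : V → ℝ := fun v => (d v : ℝ)/M with hμvdef
    have hμv0 : ∀ v, 0 ≤ μv v := fun v => by positivity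
    have hμv_q : ∀ v, μv v = (m (cls v) : ℝ) * q v := by
      intro v
      rw [hμvdef, hq]
      have := hmR (cls v)
      field_simp
    have hμv_class : ∀ i, ∑ v ∈ Ci i, μv v = (m i : ℝ) := by
      intro i
      rw [hμvdef]
      rw [← Finset.sum_div, show ((∑ v ∈ Ci i, (d v : ℝ))) = ((m i * M : ℕ) : ℝ) by
        rw [← hd_class i]; push_cast; ring]
      push_cast
      field_simp
    set U : ℝ := ∏ v : V, μv v ^ (μv v) with hU
    have hU_le : U ≤ (C * M)⁻¹ := by
      have hsplit : U = (∏ v : V, (m (cls v) : ℝ) ^ (μv v)) * ∏ v : V, q v ^ (μv v) := by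
        rw [hU, ← Finset.prod_mul_distrib]
        refine Finset.prod_congr rfl fun v _ => ?_
        rw [hμv_q v, Real.mul_rpow (le_of_lt (hmR (cls v))) (hq0 v)]
      have hF : (∏ v : V, (m (cls v) : ℝ) ^ (μv v)) = ∏ i : Fin r, (m i : ℝ) ^ (m i) := by
        rw [← Finset.prod_fiberwise_of_maps_to (fun v _ => Finset.mem_univ (cls v))
          (fun v => (m (cls v) : ℝ) ^ (μv v))]
        refine Finset.prod_congr rfl fun i _ => ?_
        have h1 : ∀ v ∈ Ci i, (m (cls v) : ℝ) ^ (μv v) = (m i : ℝ) ^ (μv v) := by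
          intro v hv
          simp only [hCi, Finset.mem_filter] at hv
          rw [hv.2]
        rw [Finset.prod_congr rfl h1, ← Real.rpow_sum_of_pos (hmR i), hμv_class i,
          Real.rpow_natCast]
      have hPc : ∏ v : V, q v ^ (μv v) = ∏ v : V, q v ^ ((d v : ℝ)/M) := rfl
      have hF0 : 0 < ∏ i : Fin r, (m i : ℝ) ^ (m i) := Finset.prod_pos fun i _ => by
        have := hmR i; positivity
      rw [hsplit, hF, hPc]
      calc (∏ i : Fin r, (m i : ℝ) ^ (m i)) * ∏ v : V, q v ^ ((d v : ℝ)/M)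
          ≤ (∏ i : Fin r, (m i : ℝ) ^ (m i)) *
            ((M:ℝ)⁻¹ * ∏ i : Fin r, (((m i).factorial : ℝ))⁻¹) :=
            mul_le_mul_of_nonneg_left hP_le (le_of_lt hF0)
        _ = (C * M)⁻¹ := by
            rw [hC, mul_inv, ← Finset.prod_inv_distrib]
            rw [show (∏ i : Fin r, ((((m i).factorial : ℝ)) / ((m i : ℝ)) ^ (m i))⁻¹)
                = ∏ i : Fin r, ((m i : ℝ) ^ (m i) * (((m i).factorial : ℝ))⁻¹) from
              Finset.prod_congr rfl fun i _ => by rw [inv_div, div_eq_mul_inv]]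
            rw [Finset.prod_mul_distrib]
            ring
    have hU0 : 0 < U := by
      refine Finset.prod_pos fun v _ => ?_
      rcases eq_or_lt_of_le (hμv0 v) with h | h
      · rw [← h, Real.rpow_zero]; norm_num
      · exact Real.rpow_pos_of_pos h _
    set T : ℝ := ∏ v : V, μv v ^ (-(μv v) / (s:ℝ)) with hT
    have hT0 : 0 ≤ T := Finset.prod_nonneg fun v _ => Real.rpow_nonneg (hμv0 v) _
    have hTs : T ^ (s:ℝ) = U⁻¹ := by
      rw [hT, ← Real.finset_prod_rpow Finset.univ _
        (fun v _ => Real.rpow_nonneg (hμv0 v) _), hU, ← Finset.prod_inv_distrib]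
      refine Finset.prod_congr rfl fun v _ => ?_
      rw [← Real.rpow_mul (hμv0 v), div_mul_cancel₀ _ (ne_of_gt hsR),
        Real.rpow_neg (hμv0 v)]
    have hfin : C * (M:ℝ) ≤ T ^ (s:ℝ) := by
      rw [hTs]
      calc C * (M:ℝ) = ((C * (M:ℝ))⁻¹)⁻¹ := (inv_inv _).symm
        _ ≤ U⁻¹ := by
            apply inv_anti₀ hU0 hU_le
    have final : (C * (M:ℝ)) ^ ((1:ℝ)/s) ≤ T := by
      have h2 : (C * (M:ℝ)) ^ ((1:ℝ)/s) ≤ (T ^ (s:ℝ)) ^ ((1:ℝ)/s) :=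
        Real.rpow_le_rpow (by positivity) hfin (by positivity)
      rwa [← Real.rpow_mul hT0, mul_one_div, div_self (ne_of_gt hsR),
        Real.rpow_one] at h2
    exact final
end

section
/- For every k ≥ 1 there exists a (k,k,k;1,1,1)-joint set system (J; F_R, F_G, F_B) with |F_R| = |F_G| = |F_B| = 2^k and |J| = 4^k. Consequently, for any n, blowing up gives systems with |F_R|=|F_G|=|F_B| = 2^k n^{2k} and |J| = 4^k n^{3k} = 2^{k/2} |F_R|^{1/2}|F_G|^{1/2}|F_B|^{1/2}. -/
namespace Stmt18Aux

/-- endpoint `t` of edge `b` of the perfect matching of color `c` on `K₄`. -/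
def eV (c : Fin 3) (b t : Bool) : Fin 4 :=
  ![![![0,1],![2,3]], ![![0,2],![1,3]], ![![0,3],![1,2]]] c
    (if b then 1 else 0) (if t then 1 else 0)

/-- the edge of color `c` avoiding vertex `v`. -/
def bitc (c : Fin 3) (v : Fin 4) : Bool :=
  decide (v = eV c false false ∨ v = eV c false true)

/-- the `s`-th vertex of the triangle avoiding `v`. -/
def tV (v : Fin 4) (s : Fin 3) : Fin 4 :=
  if (s : ℕ) < (v : ℕ) then ⟨s.val, by have := s.isLt; omega⟩
  else ⟨s.val + 1, by have := s.isLt; omega⟩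

/-- inverse of `tV v`. -/
def tIdx (v w : Fin 4) : Fin 3 :=
  if h : (w : ℕ) < (v : ℕ) then ⟨w.val, by have := v.isLt; omega⟩
  else ⟨w.val - 1, by have := w.isLt; omega⟩

lemma eV_inj_t : ∀ c b t t', eV c b t = eV c b t' → t = t' := by decide
lemma eV_inj_b : ∀ c b b' t t', eV c b t = eV c b' t' → b = b' := by decide
lemma tV_inj : ∀ v s s', tV v s = tV v s' → s = s' := by decide
lemma tIdx_tV : ∀ v s, tIdx v (tV v s) = s := by decide
lemma tV_recover : ∀ v v' : Fin 4, (∀ s, ∃ s', tV v s = tV v' s') → v = v' := by decide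
lemma exists_color : ∀ v s, ∃ c : Fin 3, ∀ t, tV v s ≠ eV c (bitc c v) t := by decide
lemma two_colors : ∀ (v : Fin 4) (s : Fin 3) (c c' : Fin 3), c ≠ c' →
    (∃ t, tV v s = eV c (bitc c v) t) ∨ (∃ t, tV v s = eV c' (bitc c' v) t) := by decide

variable {k n : ℕ}

/-- embedding of vertex `j` of block `i` into the ground set. -/
def emb (i : Fin k) (j : Fin 4) : Fin (4 * k) :=
  ⟨4 * i.val + j.val, by have := i.isLt; have := j.isLt; omega⟩

lemma emb_inj {i i' : Fin k} {j j' : Fin 4} (h : emb i j = emb i' j') :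
    i = i' ∧ j = j' := by
  have h' := Fin.val_eq_of_eq h
  simp only [emb] at h'
  have hi := i.isLt; have hi' := i'.isLt; have hj := j.isLt; have hj' := j'.isLt
  constructor <;> apply Fin.ext <;> omega

/-- a member of the color-`c` family. -/
def Fset (c : Fin 3) (b : Fin k → Bool) (g : Fin k × Bool → Fin n) :
    Finset (Fin (4 * k) × Fin n) :=
  Finset.univ.image (fun q : Fin k × Bool => (emb q.1 (eV c (b q.1) q.2), g q))

/-- a member of `J`. -/
def Pset (v : Fin k → Fin 4) (g : Fin k × Fin 3 → Fin n) :
    Finset (Fin (4 * k) × Fin n) :=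
  Finset.univ.image (fun q : Fin k × Fin 3 => (emb q.1 (tV (v q.1) q.2), g q))

/-- the color-`c` family. -/
def Fcol (k n : ℕ) (c : Fin 3) : Finset (Finset (Fin (4 * k) × Fin n)) :=
  Finset.univ.image (fun p : (Fin k → Bool) × (Fin k × Bool → Fin n) => Fset c p.1 p.2)

def Jset (k n : ℕ) : Finset (Finset (Fin (4 * k) × Fin n)) :=
  Finset.univ.image (fun p : (Fin k → Fin 4) × (Fin k × Fin 3 → Fin n) => Pset p.1 p.2)

lemma Fset_card (c : Fin 3) (b : Fin k → Bool) (g : Fin k × Bool → Fin n) :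
    (Fset c b g).card = 2 * k := by
  have hinj : Function.Injective
      (fun q : Fin k × Bool => (emb q.1 (eV c (b q.1) q.2), g q)) := by
    intro q q' h
    obtain ⟨h1, h2⟩ := emb_inj (congrArg Prod.fst h)
    rw [h1] at h2
    exact Prod.ext h1 (eV_inj_t _ _ _ _ h2)
  rw [Fset, Finset.card_image_of_injective _ hinj, Finset.card_univ]
  simp only [Fintype.card_prod, Fintype.card_bool, Fintype.card_fin]
  ring

lemma Pset_card (v : Fin k → Fin 4) (g : Fin k × Fin 3 → Fin n) :
    (Pset v g).card = 3 * k := by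
  have hinj : Function.Injective
      (fun q : Fin k × Fin 3 => (emb q.1 (tV (v q.1) q.2), g q)) := by
    intro q q' h
    obtain ⟨h1, h2⟩ := emb_inj (congrArg Prod.fst h)
    rw [h1] at h2
    exact Prod.ext h1 (tV_inj _ _ _ h2)
  rw [Pset, Finset.card_image_of_injective _ hinj, Finset.card_univ]
  simp only [Fintype.card_prod, Fintype.card_fin]
  ring

lemma mem_Fset {c : Fin 3} {b : Fin k → Bool} {g : Fin k × Bool → Fin n}
    {x : Fin (4 * k) × Fin n} :
    x ∈ Fset c b g ↔ ∃ q : Fin k × Bool, (emb q.1 (eV c (b q.1) q.2), g q) = x := by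
  simp [Fset]

lemma mem_Pset {v : Fin k → Fin 4} {g : Fin k × Fin 3 → Fin n}
    {x : Fin (4 * k) × Fin n} :
    x ∈ Pset v g ↔ ∃ q : Fin k × Fin 3, (emb q.1 (tV (v q.1) q.2), g q) = x := by
  simp [Pset]

lemma Fcol_card (c : Fin 3) : (Fcol k n c).card = 2 ^ k * n ^ (2 * k) := by
  have hinj : Function.Injective
      (fun p : (Fin k → Bool) × (Fin k × Bool → Fin n) => Fset c p.1 p.2) := by
    rintro ⟨b, g⟩ ⟨b', g'⟩ h
    simp only at h
    have key : ∀ (i : Fin k) (t : Bool), b i = b' i ∧ g (i, t) = g' (i, t) := by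
      intro i t
      have hx : (emb i (eV c (b i) t), g (i, t)) ∈ Fset c b' g' := by
        rw [← h]; exact mem_Fset.mpr ⟨(i, t), rfl⟩
      obtain ⟨q, hq⟩ := mem_Fset.mp hx
      obtain ⟨h1, h2⟩ := emb_inj (congrArg Prod.fst hq)
      subst h1
      have hb : b' q.1 = b q.1 := eV_inj_b c _ _ _ _ h2
      have ht : q.2 = t := eV_inj_t c _ _ _ (by rw [hb] at h2; exact h2)
      subst ht
      exact ⟨hb.symm, (congrArg Prod.snd hq).symm⟩
    refine Prod.ext (funext fun i => (key i false).1) (funext fun q => ?_)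
    exact (key q.1 q.2).2
  rw [Fcol, Finset.card_image_of_injective _ hinj, Finset.card_univ]
  simp only [Fintype.card_prod, Fintype.card_fun, Fintype.card_bool, Fintype.card_fin]
  ring

lemma Jset_card : (Jset k n).card = 4 ^ k * n ^ (3 * k) := by
  have hinj : Function.Injective
      (fun p : (Fin k → Fin 4) × (Fin k × Fin 3 → Fin n) => Pset p.1 p.2) := by
    rintro ⟨v, g⟩ ⟨v', g'⟩ h
    simp only at h
    have hv : ∀ i, v i = v' i := by
      intro i
      apply tV_recover
      intro s
      have hx : (emb i (tV (v i) s), g (i, s)) ∈ Pset v' g' := by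
        rw [← h]; exact mem_Pset.mpr ⟨(i, s), rfl⟩
      obtain ⟨q, hq⟩ := mem_Pset.mp hx
      obtain ⟨h1, h2⟩ := emb_inj (congrArg Prod.fst hq)
      subst h1
      exact ⟨q.2, h2.symm⟩
    have hg : ∀ q : Fin k × Fin 3, g q = g' q := by
      rintro ⟨i, s⟩
      have hx : (emb i (tV (v i) s), g (i, s)) ∈ Pset v' g' := by
        rw [← h]; exact mem_Pset.mpr ⟨(i, s), rfl⟩
      obtain ⟨q, hq⟩ := mem_Pset.mp hx
      obtain ⟨h1, h2⟩ := emb_inj (congrArg Prod.fst hq)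
      subst h1
      rw [← hv q.1] at h2
      have := tV_inj _ _ _ h2
      subst this
      exact (congrArg Prod.snd hq).symm
    exact Prod.ext (funext hv) (funext hg)
  rw [Jset, Finset.card_image_of_injective _ hinj, Finset.card_univ]
  simp only [Fintype.card_prod, Fintype.card_fun, Fintype.card_fin]
  ring

/-- The canonical `c`-colored set certifying `Pset v g`. -/
def Fcert (c : Fin 3) (v : Fin k → Fin 4) (g : Fin k × Fin 3 → Fin n) :
    Finset (Fin (4 * k) × Fin n) :=
  Fset c (fun i => bitc c (v i))
    (fun q => g (q.1, tIdx (v q.1) (eV c (bitc c (v q.1)) q.2)))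

lemma Fcert_mem (c : Fin 3) (v : Fin k → Fin 4) (g : Fin k × Fin 3 → Fin n) :
    Fcert c v g ∈ Fcol k n c :=
  Finset.mem_image.mpr ⟨(_, _), Finset.mem_univ _, rfl⟩

/-- membership of a canonical element of `P` in the certificate. -/
lemma mem_Fcert_iff (c : Fin 3) (v : Fin k → Fin 4) (g : Fin k × Fin 3 → Fin n)
    (i : Fin k) (s : Fin 3) :
    (emb i (tV (v i) s), g (i, s)) ∈ Fcert c v g ↔
      ∃ t, tV (v i) s = eV c (bitc c (v i)) t := by
  constructor
  · intro hx
    obtain ⟨q, hq⟩ := mem_Fset.mp hx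
    obtain ⟨h1, h2⟩ := emb_inj (congrArg Prod.fst hq)
    subst h1
    exact ⟨q.2, h2.symm⟩
  · rintro ⟨t, ht⟩
    apply mem_Fset.mpr
    refine ⟨(i, t), ?_⟩
    simp only
    rw [← ht, tIdx_tV]

lemma joint (v : Fin k → Fin 4) (g : Fin k × Fin 3 → Fin n) :
    (Pset v g \ Fcert 0 v g) ∪ (Pset v g \ Fcert 1 v g) ∪ (Pset v g \ Fcert 2 v g)
        = Pset v g ∧
      Disjoint (Pset v g \ Fcert 0 v g) (Pset v g \ Fcert 1 v g) ∧
      Disjoint (Pset v g \ Fcert 0 v g) (Pset v g \ Fcert 2 v g) ∧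
      Disjoint (Pset v g \ Fcert 1 v g) (Pset v g \ Fcert 2 v g) := by
  have hdisj : ∀ c c' : Fin 3, c ≠ c' →
      Disjoint (Pset v g \ Fcert c v g) (Pset v g \ Fcert c' v g) := by
    intro c c' hcc
    rw [Finset.disjoint_left]
    intro x h1 h2
    obtain ⟨hxP, hx1⟩ := Finset.mem_sdiff.mp h1
    obtain ⟨_, hx2⟩ := Finset.mem_sdiff.mp h2
    obtain ⟨⟨i, t⟩, hq⟩ := mem_Pset.mp hxP
    subst hq
    rcases two_colors (v i) t c c' hcc with ⟨u, hu⟩ | ⟨u, hu⟩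
    · exact hx1 ((mem_Fcert_iff c v g i t).mpr ⟨u, hu⟩)
    · exact hx2 ((mem_Fcert_iff c' v g i t).mpr ⟨u, hu⟩)
  refine ⟨?_, hdisj 0 1 (by decide), hdisj 0 2 (by decide), hdisj 1 2 (by decide)⟩
  apply Finset.Subset.antisymm
  · exact Finset.union_subset
      (Finset.union_subset Finset.sdiff_subset Finset.sdiff_subset) Finset.sdiff_subset
  · intro x hx
    obtain ⟨⟨i, t⟩, hq⟩ := mem_Pset.mp hx
    obtain ⟨c, hc⟩ := exists_color (v i) t
    have hnot : x ∉ Fcert c v g := by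
      rw [← hq]
      intro hmem
      obtain ⟨u, hu⟩ := (mem_Fcert_iff c v g i t).mp hmem
      exact hc u hu
    have hxc : x ∈ Pset v g \ Fcert c v g := Finset.mem_sdiff.mpr ⟨hx, hnot⟩
    fin_cases c <;> simp only [Finset.mem_union] <;> tauto

end Stmt18Aux

open Stmt18Aux in
/-- For every `k ≥ 1` there is a `(k,k,k;1,1,1)`-joint set system with
`|F_R| = |F_G| = |F_B| = 2^k` and `|J| = 4^k`, and blowing up by `n` gives systems
(on the ground set `Fin (4k) × Fin n`) with `|F_R| = |F_G| = |F_B| = 2^k n^{2k}` and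
`|J| = 4^k n^{3k} = 2^{k/2} |F_R|^{1/2} |F_G|^{1/2} |F_B|^{1/2}`.  Here `P` is a joint
set if there are `F₁ ∈ F_R`, `F₂ ∈ F_G`, `F₃ ∈ F_B` such that `P∖F₁, P∖F₂, P∖F₃`
partition `P`. -/
theorem stmt18 (k n : ℕ) (hk : 1 ≤ k) (hn : 1 ≤ n) :
    ∃ J FR FG FB : Finset (Finset (Fin (4 * k) × Fin n)),
      (∀ S ∈ FR, S.card = 2 * k) ∧ (∀ S ∈ FG, S.card = 2 * k) ∧
      (∀ S ∈ FB, S.card = 2 * k) ∧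
      FR.card = 2 ^ k * n ^ (2 * k) ∧ FG.card = 2 ^ k * n ^ (2 * k) ∧
      FB.card = 2 ^ k * n ^ (2 * k) ∧
      J.card = 4 ^ k * n ^ (3 * k) ∧
      (∀ P ∈ J, P.card = 3 * k) ∧
      (∀ P ∈ J, ∃ F₁ ∈ FR, ∃ F₂ ∈ FG, ∃ F₃ ∈ FB,
        (P \ F₁) ∪ (P \ F₂) ∪ (P \ F₃) = P ∧
        Disjoint (P \ F₁) (P \ F₂) ∧ Disjoint (P \ F₁) (P \ F₃) ∧
        Disjoint (P \ F₂) (P \ F₃)) ∧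
      ((4 ^ k * n ^ (3 * k) : ℝ)
        = (2 : ℝ) ^ ((k : ℝ) / 2)
            * ((2 ^ k * n ^ (2 * k) : ℕ) : ℝ) ^ ((1 : ℝ) / 2)
            * ((2 ^ k * n ^ (2 * k) : ℕ) : ℝ) ^ ((1 : ℝ) / 2)
            * ((2 ^ k * n ^ (2 * k) : ℕ) : ℝ) ^ ((1 : ℝ) / 2)) := by
  refine ⟨Jset k n, Fcol k n 0, Fcol k n 1, Fcol k n 2, ?_, ?_, ?_, Fcol_card 0,
    Fcol_card 1, Fcol_card 2, Jset_card, ?_, ?_, ?_⟩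
  · rintro S hS
    obtain ⟨p, -, rfl⟩ := Finset.mem_image.mp hS
    exact Fset_card 0 p.1 p.2
  · rintro S hS
    obtain ⟨p, -, rfl⟩ := Finset.mem_image.mp hS
    exact Fset_card 1 p.1 p.2
  · rintro S hS
    obtain ⟨p, -, rfl⟩ := Finset.mem_image.mp hS
    exact Fset_card 2 p.1 p.2
  · rintro P hP
    obtain ⟨p, -, rfl⟩ := Finset.mem_image.mp hP
    exact Pset_card p.1 p.2
  · rintro P hP
    obtain ⟨⟨v, g⟩, -, rfl⟩ := Finset.mem_image.mp hP
    exact ⟨Fcert 0 v g, Fcert_mem 0 v g, Fcert 1 v g, Fcert_mem 1 v g,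
      Fcert 2 v g, Fcert_mem 2 v g, joint v g⟩
  · -- the real-number identity
    set X : ℝ := (2 : ℝ) ^ k with hX
    set Y : ℝ := (n : ℝ) ^ k with hY
    set s : ℝ := (2 : ℝ) ^ ((k : ℝ) / 2) with hs
    have hY0 : 0 ≤ Y := pow_nonneg (Nat.cast_nonneg n) k
    have hs0 : 0 ≤ s := Real.rpow_nonneg (by norm_num) _
    have hss : s * s = X := by
      rw [hs, ← Real.rpow_add (by norm_num : (0:ℝ) < 2)]
      rw [show (k : ℝ) / 2 + (k : ℝ) / 2 = (k : ℕ) by ring]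
      exact Real.rpow_natCast 2 k
    have hA : ((2 ^ k * n ^ (2 * k) : ℕ) : ℝ) = (s * Y) ^ 2 := by
      push_cast
      rw [mul_pow, sq, hss, hX, hY]
      ring
    have hr : ((2 ^ k * n ^ (2 * k) : ℕ) : ℝ) ^ ((1:ℝ)/2) = s * Y := by
      rw [hA, ← Real.rpow_natCast (s * Y) 2,
        ← Real.rpow_mul (mul_nonneg hs0 hY0)]
      norm_num
    rw [hr]
    have h4 : ((4 : ℕ) : ℝ) ^ k = X ^ 2 := by
      rw [hX, ← pow_mul, show ((4:ℕ):ℝ) = 2 ^ 2 by norm_num, ← pow_mul]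
      ring
    push_cast
    rw [show (4:ℝ) ^ k = X ^ 2 by
        rw [hX, ← pow_mul, show (4:ℝ) = 2 ^ 2 by norm_num, ← pow_mul]; ring_nf,
      show (n:ℝ) ^ (3 * k) = Y ^ 3 by rw [hY, ← pow_mul]; ring_nf,
      ← hss]
    ring
end

section
/- Let S be a finite set and g : R_{>0}^S → R^S continuous with Σ_s g_s(z) constant in z, satisfying: for every nonempty proper S' ⊊ S and every path z(r) scaling the coordinates in S' by r ∈ (0,1] and fixing the others, (1) g_s ∘ z is increasing in r for s ∈ S' and decreasing for s ∉ S', and (2) max_{s∉S'} lim_{r→0} g_s(z(r)) > min_{s∈S'} lim_{r→0} g_s(z(r)). Then there exists a sequence z^{(1)}, z^{(2)}, … ∈ R_{>0}^S such that lim_{n→∞} g_s(z^{(n)}) exists for every s and all these limits are equal (to the common average γ = Σ_s g_s / |S|). Moreover the squared deviation E^{(n)} = Σ_s (g_s(z^{(n)}) − γ)² satisfies E^{(n+1)} ≤ (1 − 1/(4|S|³)) E^{(n)}. -/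
open Filter

private lemma stmt19_arith1 (N c : ℝ) (hN : N ≠ 0) : 1/(4*N^3)*(N^3*c^2) = c^2/4 := by
  field_simp

private lemma stmt19_arith2 (N R : ℝ) (hN : N ≠ 0) : N^3 * (R^2/N^2) = N * R^2 := by
  field_simp

private lemma stmt19_chain_bound (c : ℝ) (hc : 0 < c) :
    ∀ (n : ℕ) (V : Finset ℝ) (hV : V.Nonempty), V.card ≤ n →
    (∀ θ ∈ V, θ < V.max' hV → ∃ v ∈ V, θ < v ∧ v ≤ θ + c) →
    V.max' hV - V.min' hV ≤ ((V.card : ℝ) - 1) * c := by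
  intro n
  induction n with
  | zero => intro V hV hcard _; exact absurd (Finset.card_pos.2 hV) (by omega)
  | succ n ih =>
    intro V hV hcard hgap
    rcases eq_or_lt_of_le (V.min'_le _ (V.max'_mem hV)) with heq | hlt
    · have h1 : (1:ℝ) ≤ V.card := by exact_mod_cast Finset.card_pos.2 hV
      nlinarith
    · -- min' < max'
      obtain ⟨v, hvV, hv1, hv2⟩ := hgap (V.min' hV) (V.min'_mem hV) hlt
      set m := V.min' hV with hm
      classical
      set V' := V.filter (fun x => m < x) with hV'def
      have hmaxV' : V.max' hV ∈ V' := Finset.mem_filter.2 ⟨V.max'_mem hV, hlt⟩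
      have hV' : V'.Nonempty := ⟨_, hmaxV'⟩
      have hsub : V' ⊆ V := Finset.filter_subset _ _
      have hmnot : m ∉ V' := by simp [hV'def]
      have hcard' : V'.card < V.card := Finset.card_lt_card
        (Finset.ssubset_iff_of_subset hsub |>.2 ⟨m, V.min'_mem hV, hmnot⟩)
      have hmaxeq : V'.max' hV' = V.max' hV := by
        apply le_antisymm
        · exact Finset.max'_le _ _ _ fun y hy => Finset.le_max' _ _ (hsub hy)
        · exact Finset.le_max' _ _ hmaxV'
      have hgap' : ∀ θ ∈ V', θ < V'.max' hV' → ∃ w ∈ V', θ < w ∧ w ≤ θ + c := by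
        intro θ hθ hθlt
        rw [hmaxeq] at hθlt
        obtain ⟨w, hwV, hw1, hw2⟩ := hgap θ (hsub hθ) hθlt
        have : m < w := lt_of_le_of_lt (by
          have := Finset.mem_filter.1 hθ; exact le_of_lt this.2) hw1
        exact ⟨w, Finset.mem_filter.2 ⟨hwV, this⟩, hw1, hw2⟩
      have hrec := ih V' hV' (by omega) hgap'
      have hminV' : V'.min' hV' ≤ v := Finset.min'_le _ _ (Finset.mem_filter.2 ⟨hvV, hv1⟩)
      have hc1 : (1:ℝ) ≤ V'.card := by exact_mod_cast Finset.card_pos.2 hV'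
      have hcc : (V'.card : ℝ) ≤ (V.card : ℝ) - 1 := by
        have : (V'.card : ℝ) + 1 ≤ (V.card : ℝ) := by exact_mod_cast hcard'
        linarith
      rw [hmaxeq] at hrec
      nlinarith

private lemma stmt19_exists_gap (V : Finset ℝ) (hV : V.Nonempty) (c : ℝ) (hc : 0 < c)
    (h : ((V.card : ℝ) - 1) * c < V.max' hV - V.min' hV) :
    ∃ θ ∈ V, θ < V.max' hV ∧ ∀ v ∈ V, v ≤ θ ∨ θ + c < v := by
  by_contra hcon
  push_neg at hcon
  have := stmt19_chain_bound c hc V.card V hV le_rfl (by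
    intro θ hθ hθlt
    obtain ⟨v, hv, h1, h2⟩ := hcon θ hθ hθlt
    exact ⟨v, hv, h1, h2⟩)
  linarith

set_option maxHeartbeats 1000000 in
private lemma stmt19_step {S : Type*} [Fintype S] [DecidableEq S] [Nonempty S]
    (g : (S → ℝ) → (S → ℝ))
    (hcont : ContinuousOn g {z | ∀ s, 0 < z s})
    (hconst : ∀ z w : S → ℝ, (∀ s, 0 < z s) → (∀ s, 0 < w s) →
      ∑ s, g z s = ∑ s, g w s)
    (hmono : ∀ S' : Finset S, S'.Nonempty → S' ≠ Finset.univ →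
      ∀ z₀ : S → ℝ, (∀ s, 0 < z₀ s) →
      (∀ s ∈ S', MonotoneOn
        (fun r : ℝ => g (fun s' => if s' ∈ S' then r * z₀ s' else z₀ s') s)
        (Set.Ioc (0:ℝ) 1)) ∧
      (∀ s ∉ S', AntitoneOn
        (fun r : ℝ => g (fun s' => if s' ∈ S' then r * z₀ s' else z₀ s') s)
        (Set.Ioc (0:ℝ) 1)))
    (hlim : ∀ S' : Finset S, S'.Nonempty → S' ≠ Finset.univ →
      ∀ z₀ : S → ℝ, (∀ s, 0 < z₀ s) →
      ∃ Lf : S → ℝ,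
        (∀ s, Tendsto
          (fun r : ℝ => g (fun s' => if s' ∈ S' then r * z₀ s' else z₀ s') s)
          (nhdsWithin 0 (Set.Ioi 0)) (nhds (Lf s))) ∧
        ∃ s₁ ∉ S', ∃ s₂ ∈ S', Lf s₂ < Lf s₁)
    (γ : ℝ) (hγ : γ = (∑ s', g (fun _ => 1) s') / (Fintype.card S : ℝ))
    (z : S → ℝ) (hz : ∀ s, 0 < z s) :
    ∃ z' : S → ℝ, (∀ s, 0 < z' s) ∧
      ∑ s, (g z' s - γ) ^ 2 ≤ (1 - 1 / (4 * (Fintype.card S : ℝ) ^ 3)) *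
        ∑ s, (g z s - γ) ^ 2 := by
  classical
  set N : ℝ := (Fintype.card S : ℝ) with hN
  have hN1 : (1:ℝ) ≤ N := by
    rw [hN]
    exact_mod_cast Fintype.card_pos
  have hN0 : (0:ℝ) < N := by linarith
  set x : S → ℝ := g z with hx
  set E : ℝ := ∑ s, (x s - γ) ^ 2 with hE
  have hEnonneg : 0 ≤ E := Finset.sum_nonneg fun s _ => sq_nonneg _
  -- coefficient facts
  have hcoef : (0:ℝ) ≤ 1 - 1 / (4 * N ^ 3) := by
    have h4 : (4:ℝ) ≤ 4 * N ^ 3 := by nlinarith [sq_nonneg N, sq_nonneg (N-1), mul_nonneg (mul_nonneg hN0.le hN0.le) hN0.le]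
    have : 1 / (4 * N ^ 3) ≤ 1 / 4 :=
      one_div_le_one_div_of_le (by norm_num) h4
    linarith
  by_cases hE0 : E = 0
  · refine ⟨z, hz, ?_⟩
    have hgoal : (∑ s, (g z s - γ) ^ 2) = 0 := by rw [← hx, ← hE]; exact hE0
    rw [hgoal, hE0, mul_zero]
  have hEpos : 0 < E := lt_of_le_of_ne hEnonneg (Ne.symm hE0)
  -- sum of x equals N * γ
  have hsum1 : ∑ s, x s = ∑ s', g (fun _ => 1) s' :=
    hconst z (fun _ => 1) hz (fun _ => one_pos)
  have hsumx : ∑ s, x s = N * γ := by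
    rw [hsum1, hγ]; field_simp
  -- min and max of x
  obtain ⟨smax, -, hsmax⟩ := Finset.exists_max_image Finset.univ x Finset.univ_nonempty
  obtain ⟨smin, -, hsmin⟩ := Finset.exists_min_image Finset.univ x Finset.univ_nonempty
  set R : ℝ := x smax - x smin with hR
  have hxmax : ∀ s, x s ≤ x smax := fun s => hsmax s (Finset.mem_univ s)
  have hxmin : ∀ s, x smin ≤ x s := fun s => hsmin s (Finset.mem_univ s)
  -- γ between min and max
  have hγle : γ ≤ x smax := by
    have : ∑ s, x s ≤ ∑ _s : S, x smax := Finset.sum_le_sum fun s _ => hxmax s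
    rw [Finset.sum_const, Finset.card_univ, nsmul_eq_mul, hsumx] at this
    nlinarith
  have hγge : x smin ≤ γ := by
    have : ∑ _s : S, x smin ≤ ∑ s, x s := Finset.sum_le_sum fun s _ => hxmin s
    rw [Finset.sum_const, Finset.card_univ, nsmul_eq_mul, hsumx] at this
    nlinarith
  -- E ≤ N * R^2
  have hER : E ≤ N * R ^ 2 := by
    have : ∀ s, (x s - γ)^2 ≤ R^2 := by
      intro s
      have h1 : x s - γ ≤ R := by have := hxmax s; simp only [hR]; linarith
      have h2 : -(R) ≤ x s - γ := by have := hxmin s; simp only [hR]; linarith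
      nlinarith
    calc E ≤ ∑ _s : S, R^2 := Finset.sum_le_sum fun s _ => this s
      _ = N * R^2 := by rw [Finset.sum_const, Finset.card_univ, nsmul_eq_mul]
  have hRnonneg : 0 ≤ R := by simp only [hR]; linarith [hxmin smax]
  have hRpos : 0 < R := by
    rcases hRnonneg.eq_or_lt with h | h
    · exfalso; rw [← h] at hER; norm_num at hER; nlinarith
    · exact h
  set c : ℝ := R / N with hc
  have hcpos : 0 < c := div_pos hRpos hN0
  -- the gap
  set V : Finset ℝ := Finset.univ.image x with hV
  have hVne : V.Nonempty := ⟨x smax, Finset.mem_image_of_mem x (Finset.mem_univ smax)⟩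
  have hVmax : V.max' hVne = x smax := by
    apply le_antisymm
    · apply Finset.max'_le
      intro y hy
      obtain ⟨s, -, rfl⟩ := Finset.mem_image.1 hy
      exact hxmax s
    · exact Finset.le_max' _ _ (Finset.mem_image_of_mem x (Finset.mem_univ smax))
  have hVmin : V.min' hVne = x smin := by
    apply le_antisymm
    · exact Finset.min'_le _ _ (Finset.mem_image_of_mem x (Finset.mem_univ smin))
    · apply Finset.le_min'
      intro y hy
      obtain ⟨s, -, rfl⟩ := Finset.mem_image.1 hy
      exact hxmin s
  have hVcard : (V.card : ℝ) ≤ N := by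
    have : V.card ≤ Fintype.card S := by
      rw [← Finset.card_univ]; exact Finset.card_image_le
    rw [hN]; exact_mod_cast this
  have hVc1 : (1:ℝ) ≤ V.card := by exact_mod_cast Nat.succ_le_of_lt (Finset.card_pos.2 hVne)
  obtain ⟨θ, hθV, hθlt, hθgap⟩ := stmt19_exists_gap V hVne c hcpos (by
    rw [hVmax, hVmin]
    have : ((V.card : ℝ) - 1) * c ≤ (N - 1) * c := by nlinarith
    have h2 : (N - 1) * c < R := by
      have hmul : (N - 1) * c * N < R * N := by
        have he : (N-1) * c * N = (N-1) * R := by rw [hc]; field_simp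
        rw [he]; nlinarith
      exact lt_of_mul_lt_mul_right hmul hN0.le
    linarith)
  -- the set A
  set A : Finset S := Finset.univ.filter (fun s => θ < x s) with hA
  have hsmaxA : smax ∈ A := by
    simp only [hA, Finset.mem_filter, Finset.mem_univ, true_and]
    rw [hVmax] at hθlt; exact hθlt
  have hAne : A.Nonempty := ⟨smax, hsmaxA⟩
  have hsminA : smin ∉ A := by
    simp only [hA, Finset.mem_filter, Finset.mem_univ, true_and, not_lt]
    have : V.min' hVne ≤ θ := Finset.min'_le _ _ hθV
    rw [hVmin] at this; linarith
  have hAprop : A ≠ Finset.univ := fun h => hsminA (h ▸ Finset.mem_univ smin)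
  have hmemA : ∀ s ∈ A, θ + c < x s := by
    intro s hs
    have hsx : x s ∈ V := Finset.mem_image_of_mem x (Finset.mem_univ s)
    rcases hθgap (x s) hsx with h | h
    · simp only [hA, Finset.mem_filter] at hs; linarith [hs.2]
    · exact h
  have hmemAc : ∀ s ∉ A, x s ≤ θ := by
    intro s hs
    simp only [hA, Finset.mem_filter, Finset.mem_univ, true_and, not_lt] at hs
    exact hs
  -- complement
  set B : Finset S := Finset.univ \ A with hB
  have hBne : B.Nonempty := ⟨smin, by simp [hB, hsminA]⟩
  have hBmem : ∀ s, s ∈ B ↔ s ∉ A := by intro s; simp [hB]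
  -- path
  set p : ℝ → (S → ℝ) := fun r s' => if s' ∈ A then r * z s' else z s' with hp
  have hppos : ∀ r : ℝ, 0 < r → ∀ s, 0 < p r s := by
    intro r hr s
    simp only [hp]
    split
    · exact mul_pos hr (hz s)
    · exact hz s
  have hp1 : p 1 = z := by
    funext s; simp [hp]
  obtain ⟨hmonoA, hantiA⟩ := hmono A hAne hAprop z hz
  obtain ⟨Lf, hLf, s₁, hs₁, s₂, hs₂, hLf12⟩ := hlim A hAne hAprop z hz
  -- continuity of r ↦ g (p r)
  have hpc : Continuous p := by
    apply continuous_pi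
    intro s
    simp only [hp]
    split
    · exact (continuous_id.mul continuous_const)
    · exact continuous_const
  have hgp : ContinuousOn (fun r => g (p r)) (Set.Ioi (0:ℝ)) := by
    apply hcont.comp hpc.continuousOn
    intro r hr
    exact hppos r hr
  have hgps : ∀ s, ContinuousOn (fun r => g (p r) s) (Set.Ioi (0:ℝ)) :=
    fun s => (continuous_apply s).comp_continuousOn hgp
  -- F
  set F : ℝ → ℝ := fun r => A.inf' hAne (fun s => g (p r) s) - B.sup' hBne (fun s => g (p r) s)
    with hF
  have hFcont : ContinuousOn F (Set.Ioi (0:ℝ)) := by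
    intro r hr
    have h1 : ContinuousWithinAt (fun r => A.inf' hAne (fun s => g (p r) s)) (Set.Ioi 0) r :=
      ContinuousWithinAt.finset_inf'_apply hAne (fun i _ => (hgps i) r hr)
    have h2 : ContinuousWithinAt (fun r => B.sup' hBne (fun s => g (p r) s)) (Set.Ioi 0) r :=
      ContinuousWithinAt.finset_sup'_apply hBne (fun i _ => (hgps i) r hr)
    exact h1.sub h2
  -- F 1 ≥ c
  have hgp1 : ∀ s, g (p 1) s = x s := by intro s; rw [hp1]
  have hF1 : c ≤ F 1 := by
    have hinf : θ + c ≤ A.inf' hAne (fun s => g (p 1) s) := by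
      apply Finset.le_inf'
      intro s hs
      rw [hgp1 s]
      exact le_of_lt (hmemA s hs)
    have hsup : B.sup' hBne (fun s => g (p 1) s) ≤ θ := by
      apply Finset.sup'_le
      intro s hs
      rw [hgp1 s]
      exact hmemAc s ((hBmem s).1 hs)
    simp only [hF]
    linarith
  -- limit of F at 0+ is negative
  have hFlim : Tendsto F (nhdsWithin 0 (Set.Ioi 0))
      (nhds (A.inf' hAne Lf - B.sup' hBne Lf)) := by
    have h1 := Filter.Tendsto.finset_inf'_nhds_apply hAne (fun i _ => hLf i)
    have h2 := Filter.Tendsto.finset_sup'_nhds_apply hBne (fun i _ => hLf i)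
    exact h1.sub h2
  have hLneg : A.inf' hAne Lf - B.sup' hBne Lf < 0 := by
    have h1 : A.inf' hAne Lf ≤ Lf s₂ := Finset.inf'_le _ hs₂
    have h2 : Lf s₁ ≤ B.sup' hBne Lf := Finset.le_sup' _ ((hBmem s₁).2 hs₁)
    linarith
  -- find r₀ with F r₀ < 0
  have hev : ∀ᶠ r in nhdsWithin 0 (Set.Ioi 0), F r < 0 :=
    hFlim.eventually (Filter.Tendsto.eventually_lt_const (by linarith) tendsto_id)
  -- pick r₀ with F r₀ < 0
  have hIio : ∀ᶠ r in nhdsWithin (0:ℝ) (Set.Ioi 0), r < 1 :=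
    Filter.Eventually.filter_mono nhdsWithin_le_nhds (gt_mem_nhds (by norm_num : (0:ℝ) < 1))
  have hmem : ∀ᶠ r in nhdsWithin (0:ℝ) (Set.Ioi 0), 0 < r :=
    eventually_mem_nhdsWithin
  obtain ⟨r₀, hFr₀, hr₀1, hr₀pos⟩ := (hev.and (hIio.and hmem)).exists
  -- IVT
  have hsubset : Set.Icc r₀ 1 ⊆ Set.Ioi (0:ℝ) := fun r hr => lt_of_lt_of_le hr₀pos hr.1
  obtain ⟨r', hr'Icc, hFr'⟩ := intermediate_value_Icc (le_of_lt hr₀1) (hFcont.mono hsubset)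
    (⟨le_of_lt hFr₀, by linarith⟩ : (0:ℝ) ∈ Set.Icc (F r₀) (F 1))
  have hr'pos : 0 < r' := lt_of_lt_of_le hr₀pos hr'Icc.1
  have hr'Ioc : r' ∈ Set.Ioc (0:ℝ) 1 := ⟨hr'pos, hr'Icc.2⟩
  have h1Ioc : (1:ℝ) ∈ Set.Ioc (0:ℝ) 1 := ⟨one_pos, le_rfl⟩
  refine ⟨p r', hppos r' hr'pos, ?_⟩
  set y : S → ℝ := g (p r') with hy
  -- monotonicity comparisons
  have hyx : ∀ s ∈ A, y s ≤ x s := by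
    intro s hs
    have h := hmonoA s hs hr'Ioc h1Ioc hr'Icc.2
    have h' : g (p r') s ≤ g (p 1) s := h
    rw [hp1] at h'
    exact h'
  have hxy : ∀ s ∉ A, x s ≤ y s := by
    intro s hs
    have h := hantiA s hs hr'Ioc h1Ioc hr'Icc.2
    have h' : g (p 1) s ≤ g (p r') s := h
    rw [hp1] at h'
    exact h'
  -- the common value t
  set t : ℝ := B.sup' hBne (fun s => y s) with ht
  have htinf : A.inf' hAne (fun s => y s) = t := by
    have h := hFr'
    simp only [hF] at h
    have : A.inf' hAne (fun s => g (p r') s) = B.sup' hBne (fun s => g (p r') s) := by linarith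
    exact this
  have hty : ∀ s ∈ A, t ≤ y s := by
    intro s hs
    rw [← htinf]
    exact Finset.inf'_le _ hs
  have hyt : ∀ s ∈ B, y s ≤ t := fun s hs => Finset.le_sup' _ hs
  obtain ⟨a, haA, hat⟩ := Finset.exists_mem_eq_inf' hAne (fun s => y s)
  obtain ⟨b, hbB, hbt⟩ := Finset.exists_mem_eq_sup' hBne (fun s => y s)
  have hya : y a = t := by rw [← htinf, hat]
  have hyb : y b = t := by rw [ht, hbt]
  -- sum preserved
  have hsumy : ∑ s, y s = ∑ s, x s := hconst (p r') z (hppos r' hr'pos) hz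
  -- identity ∑ (v-γ)² - ∑(v-t)² depends only on ∑ v
  have hid : ∀ v : S → ℝ, ∑ s, ((v s - γ)^2 - (v s - t)^2)
      = 2*(t-γ)*(∑ s, v s) + N*(γ^2 - t^2) := by
    intro v
    have h1 : ∀ s : S, (v s - γ)^2 - (v s - t)^2 = 2*(t-γ)*(v s) + (γ^2 - t^2) :=
      fun s => by ring
    rw [Finset.sum_congr rfl (fun s _ => h1 s), Finset.sum_add_distrib, ← Finset.mul_sum,
      Finset.sum_const, Finset.card_univ, nsmul_eq_mul]
  have hidx := hid x
  have hidy := hid y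
  rw [Finset.sum_sub_distrib] at hidx hidy
  rw [hsumy] at hidy
  -- termwise square comparison
  have hterm : ∀ s, (y s - t)^2 ≤ (x s - t)^2 := by
    intro s
    by_cases hs : s ∈ A
    · have h1 := hty s hs
      have h2 := hyx s hs
      have h3 : (0:ℝ) ≤ y s - t := by linarith
      have h4 : y s - t ≤ x s - t := by linarith
      exact pow_le_pow_left₀ h3 h4 2
    · have hsB : s ∈ B := (hBmem s).2 hs
      have h1 := hyt s hsB
      have h2 := hxy s hs
      have h5 : (y s - t)^2 ≤ (t - x s)^2 := sq_le_sq' (by linarith) (by linarith)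
      calc (y s - t)^2 ≤ (t - x s)^2 := h5
        _ = (x s - t)^2 := by ring
  -- the two special coordinates
  have hab : a ≠ b := fun h => ((hBmem b).1 hbB) (h ▸ haA)
  have hxa : θ + c < x a := hmemA a haA
  have hxb : x b ≤ θ := hmemAc b ((hBmem b).1 hbB)
  have hta : t ≤ x a := hya ▸ hyx a haA
  have htb : x b ≤ t := hyb ▸ hxy b ((hBmem b).1 hbB)
  have hpair : c^2/2 ≤ (x a - t)^2 + (x b - t)^2 := by
    have habs : ∀ u w cc : ℝ, 0 < cc → cc ≤ u + w → 0 ≤ u → 0 ≤ w →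
        cc^2/2 ≤ u^2 + w^2 := by
      intro u w cc hcc hsum hu hw
      nlinarith only [sq_nonneg (u - w), sq_nonneg (u + w - cc), hcc, hsum, hu, hw]
    have h6 := habs (x a - t) (t - x b) c hcpos (by linarith) (by linarith) (by linarith)
    have h7 : (t - x b)^2 = (x b - t)^2 := by ring
    linarith
  have hge : (x a - t)^2 + (x b - t)^2 ≤ ∑ s, ((x s - t)^2 - (y s - t)^2) := by
    have hpair_eq : (x a - t)^2 + (x b - t)^2
        = ∑ s ∈ ({a, b} : Finset S), ((x s - t)^2 - (y s - t)^2) := by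
      rw [Finset.sum_pair hab, hya, hyb]
      ring
    rw [hpair_eq]
    apply Finset.sum_le_sum_of_subset_of_nonneg (Finset.subset_univ _)
    intro s _ _
    linarith [hterm s]
  rw [Finset.sum_sub_distrib] at hge
  have hkey : (∑ s, (y s - γ)^2) ≤ E - c^2/2 := by linarith
  -- conclude
  clear_value N E c R t y x V
  have hNne : N ≠ 0 := ne_of_gt hN0
  have hc2 : E ≤ N^3 * c^2 := by
    have h1 : c^2 = R^2 / N^2 := by rw [hc, div_pow]
    have h2 : N^3 * (R^2/N^2) = N * R^2 := stmt19_arith2 N R hNne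
    rw [h1, h2]
    exact hER
  have hmul : 1/(4*N^3)*E ≤ c^2/4 := by
    have hDE : 1/(4*N^3)*(N^3*c^2) = c^2/4 := stmt19_arith1 N c hNne
    calc 1/(4*N^3)*E ≤ 1/(4*N^3)*(N^3*c^2) :=
          mul_le_mul_of_nonneg_left hc2 (by positivity)
      _ = c^2/4 := hDE
  calc ∑ s, (y s - γ)^2 ≤ E - c^2/2 := hkey
    _ ≤ E - 1/(4*N^3)*E := by linarith [sq_nonneg c]
    _ = (1 - 1/(4*N^3)) * E := by ring

/-- Iterative equalization lemma: let `g : ℝ_{>0}^S → ℝ^S` be continuous with constant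
coordinate sum, such that scaling the coordinates in a nonempty proper subset `S'` by
`r ∈ (0,1]` makes `g_s` increasing in `r` for `s ∈ S'` and decreasing for `s ∉ S'`, and
such that as `r → 0⁺` some limit value outside `S'` exceeds some limit value inside `S'`.
Then there is a sequence `z⁽ⁿ⁾` of positive vectors with all `g_s(z⁽ⁿ⁾)` converging to the
common average `γ`, with the squared deviation contracting by a factor `1 − 1/(4|S|³)`. -/
theorem stmt19 {S : Type*} [Fintype S] [DecidableEq S] [Nonempty S]
    (g : (S → ℝ) → (S → ℝ))
    (hcont : ContinuousOn g {z | ∀ s, 0 < z s})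
    (hconst : ∀ z w : S → ℝ, (∀ s, 0 < z s) → (∀ s, 0 < w s) →
      ∑ s, g z s = ∑ s, g w s)
    (hmono : ∀ S' : Finset S, S'.Nonempty → S' ≠ Finset.univ →
      ∀ z₀ : S → ℝ, (∀ s, 0 < z₀ s) →
      (∀ s ∈ S', MonotoneOn
        (fun r : ℝ => g (fun s' => if s' ∈ S' then r * z₀ s' else z₀ s') s)
        (Set.Ioc (0:ℝ) 1)) ∧
      (∀ s ∉ S', AntitoneOn
        (fun r : ℝ => g (fun s' => if s' ∈ S' then r * z₀ s' else z₀ s') s)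
        (Set.Ioc (0:ℝ) 1)))
    (hlim : ∀ S' : Finset S, S'.Nonempty → S' ≠ Finset.univ →
      ∀ z₀ : S → ℝ, (∀ s, 0 < z₀ s) →
      ∃ Lf : S → ℝ,
        (∀ s, Tendsto
          (fun r : ℝ => g (fun s' => if s' ∈ S' then r * z₀ s' else z₀ s') s)
          (nhdsWithin 0 (Set.Ioi 0)) (nhds (Lf s))) ∧
        ∃ s₁ ∉ S', ∃ s₂ ∈ S', Lf s₂ < Lf s₁) :
    ∃ zseq : ℕ → (S → ℝ), (∀ n s, 0 < zseq n s) ∧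
      (∀ s, Tendsto (fun n => g (zseq n) s) atTop
        (nhds ((∑ s', g (fun _ => 1) s') / (Fintype.card S : ℝ)))) ∧
      (∀ n : ℕ,
        ∑ s, (g (zseq (n + 1)) s - (∑ s', g (fun _ => 1) s') / (Fintype.card S : ℝ)) ^ 2
          ≤ (1 - 1 / (4 * (Fintype.card S : ℝ) ^ 3)) *
            ∑ s, (g (zseq n) s - (∑ s', g (fun _ => 1) s') / (Fintype.card S : ℝ)) ^ 2) := by
  classical
  set γ : ℝ := (∑ s', g (fun _ => 1) s') / (Fintype.card S : ℝ) with hγ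
  set q : ℝ := 1 - 1 / (4 * (Fintype.card S : ℝ) ^ 3) with hq
  have hN1 : (1:ℝ) ≤ (Fintype.card S : ℝ) := by exact_mod_cast Fintype.card_pos
  have hq0 : 0 ≤ q := by
    rw [hq]
    have hN0 : (0:ℝ) < (Fintype.card S : ℝ) := by linarith
    have h4 : (4:ℝ) ≤ 4 * (Fintype.card S : ℝ) ^ 3 := by
      nlinarith [sq_nonneg ((Fintype.card S : ℝ)), sq_nonneg ((Fintype.card S : ℝ) - 1),
        mul_nonneg (mul_nonneg hN0.le hN0.le) hN0.le]
    have : 1 / (4 * (Fintype.card S : ℝ) ^ 3) ≤ 1 / 4 :=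
      one_div_le_one_div_of_le (by norm_num) h4
    linarith
  have hq1 : q < 1 := by
    rw [hq]
    have : 0 < 1 / (4 * (Fintype.card S : ℝ) ^ 3) := by positivity
    linarith
  have step := stmt19_step g hcont hconst hmono hlim γ hγ
  have key : ∀ w : {z : S → ℝ // ∀ s, 0 < z s}, ∃ w' : {z : S → ℝ // ∀ s, 0 < z s},
      ∑ s, (g w'.1 s - γ) ^ 2 ≤ q * ∑ s, (g w.1 s - γ) ^ 2 := by
    intro w
    obtain ⟨z', h1, h2⟩ := step w.1 w.2
    exact ⟨⟨z', h1⟩, h2⟩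
  choose f hf using key
  set z0 : {z : S → ℝ // ∀ s, 0 < z s} := ⟨fun _ => 1, fun _ => one_pos⟩ with hz0
  set E : ℕ → ℝ := fun n => ∑ s, (g (f^[n] z0).1 s - γ) ^ 2 with hEdef
  have hstep : ∀ n, E (n + 1) ≤ q * E n := by
    intro n
    simp only [hEdef, Function.iterate_succ_apply']
    exact hf _
  have hEnonneg : ∀ n, 0 ≤ E n := fun n => Finset.sum_nonneg fun s _ => sq_nonneg _
  have hEgeo : ∀ n, E n ≤ q ^ n * E 0 := by
    intro n
    induction n with
    | zero => simp
    | succ n ih =>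
      calc E (n + 1) ≤ q * E n := hstep n
        _ ≤ q * (q ^ n * E 0) := mul_le_mul_of_nonneg_left ih hq0
        _ = q ^ (n + 1) * E 0 := by ring
  have hgeo0 : Tendsto (fun n => q ^ n * E 0) atTop (nhds 0) := by
    have := (tendsto_pow_atTop_nhds_zero_of_lt_one hq0 hq1).mul_const (E 0)
    simpa using this
  have hE0 : Tendsto E atTop (nhds 0) := squeeze_zero hEnonneg hEgeo hgeo0
  refine ⟨fun n => (f^[n] z0).1, fun n => (f^[n] z0).2, ?_, hstep⟩
  intro s
  have hsq : ∀ n, (g (f^[n] z0).1 s - γ) ^ 2 ≤ E n := by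
    intro n
    have := Finset.single_le_sum (f := fun s' => (g (f^[n] z0).1 s' - γ) ^ 2)
      (fun s' _ => sq_nonneg _) (Finset.mem_univ s)
    simpa only [hEdef] using this
  have h2 : Tendsto (fun n => (g (f^[n] z0).1 s - γ) ^ 2) atTop (nhds 0) :=
    squeeze_zero (fun n => sq_nonneg _) hsq hE0
  have h3 : Tendsto (fun n => |g (f^[n] z0).1 s - γ|) atTop (nhds 0) := by
    have := (Real.continuous_sqrt.tendsto 0).comp h2
    simpa [Function.comp_def, Real.sqrt_sq_eq_abs] using this
  have h4 : Tendsto (fun n => g (f^[n] z0).1 s - γ) atTop (nhds 0) :=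
    (tendsto_zero_iff_abs_tendsto_zero _).2 h3
  have h5 := h4.add (tendsto_const_nhds (x := γ))
  simpa using h5
end
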